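/- arXiv:2507.07022 — 4 statements merged into one kernel-verified Lean document; each statement's English description precedes it below -/
import Mathlib

section
/- The squarefree principal t-spread Borel ideal B_t(u) admits the minimal primary decomposition B_t(u) = ( intersection over G in the family 𝒢 of P_{[n]∖G} ) ∩ ( intersection over v in G(B_t(u)) of P_{[n]∖supp_t(v)} ); in particular, the primes P_{[n]∖G} for G in 𝒢 together with the primes P_{[n]∖supp_t(v)} for v in G(B_t(u)) are exactly the minimal primes of B_t(u), and this intersection is irredundant. -/
open Finset MvPolynomial

/-! Common definitions for principal vector-spread Borel ideals
(Crupi–Ficarra–Lax, "Principal vector-spread Borel ideals").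

Throughout, `S = K[x_1,…,x_n]` is realized as `MvPolynomial (Fin n) K`, and the
variable `x_p` (1-based position `p ∈ [1,n]`) is `X (p-1)`. -/

/-- The variable `x_p` of `K[x_1,…,x_n]`, for a 1-based position `p ∈ [1,n]`. -/
noncomputable def xv (K : Type*) [Field K] (n : ℕ) [NeZero n] (p : ℕ) :
    MvPolynomial (Fin n) K := MvPolynomial.X (Fin.ofNat n (p - 1 : ℕ))

/-- The squarefree monomial `x_{i 1} ⋯ x_{i e}` determined by the index function `i`. -/
noncomputable def monOf (K : Type*) [Field K] (n : ℕ) [NeZero n] (e : ℕ) (i : ℕ → ℕ) :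
    MvPolynomial (Fin n) K := ∏ r ∈ Finset.Icc 1 e, xv K n (i r)

/-- Index functions of the `t`-spread monomials `x_{i 1} ⋯ x_{i e}` with `i r ≤ J r` for
all `r = 1,…,e`.  (These monomials form the minimal monomial generating set of the
principal `t`-spread Borel ideal `B_t(x_{J 1} ⋯ x_{J e})`.) -/
def spreadIdx (e : ℕ) (t J : ℕ → ℕ) : Set (ℕ → ℕ) :=
  {i | (∀ r, 1 ≤ r → r ≤ e → 1 ≤ i r ∧ i r ≤ J r) ∧
    (∀ r, 1 ≤ r → r + 1 ≤ e → i r + t r ≤ i (r + 1))}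

/-- The principal `t`-spread Borel ideal `B_t(x_{J 1} ⋯ x_{J e})`: the ideal generated by
all `t`-spread monomials `x_{i 1} ⋯ x_{i e}` with `i r ≤ J r` for all `r`. -/
noncomputable def tBorel (K : Type*) [Field K] (n : ℕ) [NeZero n] (e : ℕ) (t J : ℕ → ℕ) :
    Ideal (MvPolynomial (Fin n) K) :=
  Ideal.span ((fun i => monOf K n e i) '' spreadIdx e t J)

/-- The monomial prime ideal `P_A = (x_p : p ∈ A)`, for a set `A` of 1-based positions. -/
noncomputable def pA (K : Type*) [Field K] (n : ℕ) [NeZero n] (A : Set ℕ) :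
    Ideal (MvPolynomial (Fin n) K) := Ideal.span (xv K n '' A)

/-- The `t`-spread support `supp_t(x_{i 1} ⋯ x_{i e}) = ⋃_{s=1}^{e-1} [i s, i s + t s - 1]`. -/
def tSupp (e : ℕ) (t : ℕ → ℕ) (i : ℕ → ℕ) : Set ℕ :=
  ⋃ s ∈ Finset.Icc 1 (e - 1), Set.Icc (i s) (i s + t s - 1)

/-- The `k`-th symbolic power of a (squarefree monomial) ideal: the intersection of the
`k`-th powers of its minimal primes. -/
noncomputable def symbPow {R : Type*} [CommRing R] (I : Ideal R) (k : ℕ) : Ideal R :=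
  ⨅ P ∈ I.minimalPrimes, P ^ k

/-- The Alexander dual `⨅_{v} P_{supp v}` of the squarefree monomial ideal whose minimal
monomial generators are the degree `e` squarefree monomials indexed by `gen`. -/
noncomputable def alexDualOf (K : Type*) [Field K] (n : ℕ) [NeZero n] (e : ℕ)
    (gen : Set (ℕ → ℕ)) : Ideal (MvPolynomial (Fin n) K) :=
  ⨅ i ∈ gen, pA K n (i '' Set.Icc 1 e)

/-- The height of an ideal: the infimum of the heights of its minimal primes, the height
of a prime being its height in the poset of prime ideals. -/
noncomputable def idealHeight {R : Type*} [CommRing R] (I : Ideal R) : ℕ∞ :=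
  ⨅ (p : PrimeSpectrum R) (_ : p.asIdeal ∈ I.minimalPrimes), Order.height p

/-- The depth of the module `M` with respect to the ideal `P`: the supremum of the lengths
of `M`-regular sequences consisting of elements of `P`. -/
noncomputable def depthWrt (R : Type*) (M : Type*) [CommRing R] [AddCommGroup M]
    [Module R M] (P : Ideal R) : ℕ∞ :=
  ⨆ (k : ℕ) (_ : ∃ x : Fin k → R, (∀ a, x a ∈ P) ∧
    RingTheory.Sequence.IsRegular M (List.ofFn x)), (k : ℕ∞)

/-- The (Krull) dimension of a module `M`: the Krull dimension of `R / ann M`. -/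
noncomputable def modKrullDim (R : Type*) (M : Type*) [CommRing R] [AddCommGroup M]
    [Module R M] : WithBot ℕ∞ := ringKrullDim (R ⧸ Module.annihilator R M)

/-- A module is Cohen–Macaulay (with respect to the ideal `P`, e.g. the graded maximal
ideal) if its depth equals its Krull dimension. -/
def IsCohenMacaulayMod (R : Type*) (M : Type*) [CommRing R] [AddCommGroup M] [Module R M]
    (P : Ideal R) : Prop := (depthWrt R M P : WithBot ℕ∞) = modKrullDim R M

/-- The depth of a local ring: max length of a regular sequence in the maximal ideal. -/
noncomputable def ringDepth (A : Type*) [CommRing A] [IsLocalRing A] : ℕ∞ :=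
  depthWrt A A (IsLocalRing.maximalIdeal A)

/-- A local ring is Cohen–Macaulay if its depth equals its Krull dimension. -/
def IsCohenMacaulayLocalRing (A : Type*) [CommRing A] [IsLocalRing A] : Prop :=
  (ringDepth A : WithBot ℕ∞) = ringKrullDim A

/-- A (commutative Noetherian) ring is Cohen–Macaulay if all its localizations at prime
ideals are Cohen–Macaulay local rings. -/
def IsCohenMacaulayRing (A : Type*) [CommRing A] : Prop :=
  ∀ (P : Ideal A) (hP : P.IsPrime), haveI := hP
    IsCohenMacaulayLocalRing (Localization.AtPrime P)

/-- The analytic spread of `I`: the Krull dimension of `R(I)/m R(I)`, where `R(I)` is the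
Rees algebra of `I` and `m` the (graded maximal) ideal. -/
noncomputable def analyticSpread {R : Type*} [CommRing R] (m I : Ideal R) : WithBot ℕ∞ :=
  ringKrullDim (↥(reesAlgebra I) ⧸ Ideal.map (algebraMap R ↥(reesAlgebra I)) m)

/-- `{p,q}` is an edge of the linear relation graph of the monomial ideal whose minimal
generators are the degree `e` squarefree monomials indexed by `gen` (positions 1-based,
within `[1,n]`). -/
def lrEdge (K : Type*) [Field K] (n : ℕ) [NeZero n] (e : ℕ) (gen : Set (ℕ → ℕ))
    (p q : ℕ) : Prop :=
  1 ≤ p ∧ p ≤ n ∧ 1 ≤ q ∧ q ≤ n ∧ p ≠ q ∧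
    ∃ i ∈ gen, ∃ i' ∈ gen, xv K n p * monOf K n e i = xv K n q * monOf K n e i'

/-- A facet of a simplicial complex: a maximal face. -/
def isFacet (Δ : Set (Finset ℕ)) (F : Finset ℕ) : Prop :=
  F ∈ Δ ∧ ∀ G ∈ Δ, F ⊆ G → F = G

/-- Vertex decomposability of a simplicial complex (faces as finsets of vertices):
either a simplex (including the void complex and `{∅}`), or there is a vertex whose
deletion and link are vertex decomposable and every facet of the deletion is a facet. -/
inductive VDecomp : Set (Finset ℕ) → Prop
  | empty : VDecomp ∅
  | simplex (A : Finset ℕ) : VDecomp {F | F ⊆ A}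
  | step (Δ : Set (Finset ℕ)) (v : ℕ) (hv : ∃ F ∈ Δ, v ∈ F)
      (hdel : VDecomp {F ∈ Δ | v ∉ F})
      (hlink : VDecomp {F | F ∈ Δ ∧ v ∉ F ∧ insert v F ∈ Δ})
      (hfac : ∀ F, isFacet {F ∈ Δ | v ∉ F} F → isFacet Δ F) : VDecomp Δ

/-- The `a`-th layer `J (a+1) / J a` of a filtration of ideals, as an `R`-module. -/
abbrev layerOf {R : Type*} [CommRing R] {r : ℕ} (J : Fin (r + 1) → Ideal R) (a : Fin r) :=
  ↥(J a.succ) ⧸ (Submodule.comap (J a.succ).subtype (J a.castSucc))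

/-- The family of monomial primes appearing in the minimal primary decomposition of
`B_t(u)`: the primes `P_{[n]∖G}` for `G ∈ 𝒢` (where `G = supp_t(x_{l 1}⋯x_{l (s-1)} x_{j s})
∪ [j s + 1, n]` for a generator `x_{l 1}⋯x_{l (s-1)} x_{j s}` of `B_t(x_{j 1}⋯x_{j s})`,
`s = 1,…,d`), together with the primes `P_{[n]∖supp_t(v)}` for `v ∈ G(B_t(u))`. -/
def decompPrimes (K : Type*) [Field K] (n d : ℕ) [NeZero n] (t j : ℕ → ℕ) :
    Set (Ideal (MvPolynomial (Fin n) K)) :=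
  {P | (∃ s, 1 ≤ s ∧ s ≤ d ∧ ∃ i ∈ spreadIdx s t j, i s = j s ∧
          P = pA K n (Set.Icc 1 n \ (tSupp s t i ∪ Set.Icc (j s + 1) n))) ∨
    (∃ i ∈ spreadIdx d t j, P = pA K n (Set.Icc 1 n \ tSupp d t i))}

/-! Both sides are monomial ideals: a monomial lies in `P_{[n]∖G}` iff its support is not
contained in `G`, and in `B_t(u)` iff its support contains that of a generator. So the
decomposition says that a set `T ⊆ [n]` contains the support of no generator iff it lies in some
`G`. If it contains none, a greedy choice of a `t`-spread sequence in `T` (always the least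
admissible index) gets stuck at some step `s`, and the indices chosen before show `T ⊆ G` for a
`G` built at level `s`. Conversely, a pigeonhole argument shows that no `G` contains the support
of a generator; the same pigeonhole shows that `G ⊆ G'` forces `s ≤ s'`, and then counting gives
`|G'| ≤ |G|`. Hence the sets `G` are pairwise incomparable, and an intersection of finitely many
pairwise incomparable primes is irredundant, with exactly these primes as its minimal primes. -/

section PrimeAntichain

variable {R : Type*} [CommRing R] {F : Set (Ideal R)}

theorem Ideal.IsPrime.exists_le_of_sInf_le {Q : Ideal R} (hQ : Q.IsPrime) (hF : F.Finite)
    (h : sInf F ≤ Q) : ∃ P ∈ F, P ≤ Q := by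
  lift F to Finset (Ideal R) using hF
  rw [← Finset.inf_id_eq_sInf] at h
  simpa using hQ.inf_le'.mp h

theorem Ideal.minimalPrimes_sInf_of_isAntichain (hF : F.Finite) (hprime : ∀ P ∈ F, P.IsPrime)
    (hanti : IsAntichain (· ≤ ·) F) : (sInf F).minimalPrimes = F := by
  ext Q
  constructor
  · rintro ⟨⟨hQ, hFQ⟩, hmin⟩
    obtain ⟨P, hP, hPQ⟩ := hQ.exists_le_of_sInf_le hF hFQ
    rwa [le_antisymm hPQ (hmin ⟨hprime P hP, sInf_le hP⟩ hPQ)] at hP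
  · intro hQ
    refine ⟨⟨hprime Q hQ, sInf_le hQ⟩, fun P ⟨hP, hFP⟩ hPQ => ?_⟩
    obtain ⟨P', hP', hP'P⟩ := hP.exists_le_of_sInf_le hF hFP
    rw [hanti.eq hP' hQ (hP'P.trans hPQ)] at hP'P
    exact hP'P

theorem Ideal.not_sInf_diff_singleton_le_of_isAntichain (hF : F.Finite)
    (hprime : ∀ P ∈ F, P.IsPrime) (hanti : IsAntichain (· ≤ ·) F) {P : Ideal R} (hP : P ∈ F) :
    ¬ sInf (F \ {P}) ≤ P := fun h => by
  obtain ⟨Q, ⟨hQ, hQP⟩, hle⟩ := (hprime P hP).exists_le_of_sInf_le (hF.subset Set.sdiff_subset) h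
  exact hQP (hanti.eq hQ hP hle)

end PrimeAntichain

namespace MvPolynomial

variable {σ R : Type*} [CommRing R]

theorem sub_aeval_mem_span_X_image (s : Set σ) [DecidablePred (· ∈ s)] (q : MvPolynomial σ R) :
    q - aeval (fun a => if a ∈ s then 0 else X a) q ∈ Ideal.span (X '' s) := by
  set g : σ → MvPolynomial σ R := fun a => if a ∈ s then 0 else X a
  induction q using MvPolynomial.induction_on with
  | C a => simp
  | add p q hp hq => simpa [add_sub_add_comm] using add_mem hp hq
  | mul_X p a hp =>
    have hXa : X a - g a ∈ Ideal.span (X '' s : Set (MvPolynomial σ R)) := by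
      by_cases ha : a ∈ s
      · simpa [g, ha] using Ideal.subset_span (Set.mem_image_of_mem X ha)
      · simp [g, ha]
    rw [map_mul, aeval_X, show p * X a - aeval g p * g a =
      (p - aeval g p) * X a + aeval g p * (X a - g a) by ring]
    exact add_mem (Ideal.mul_mem_right _ _ hp) (Ideal.mul_mem_left _ _ hXa)

theorem span_X_image_eq_ker (s : Set σ) [DecidablePred (· ∈ s)] :
    Ideal.span (X '' s : Set (MvPolynomial σ R)) =
      RingHom.ker (aeval (R := R) fun a => if a ∈ s then 0 else (X a : MvPolynomial σ R)) := by
  apply le_antisymm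
  · rw [Ideal.span_le]
    rintro _ ⟨a, ha, rfl⟩
    simp [ha]
  · intro q hq
    have h := sub_aeval_mem_span_X_image s q
    rwa [RingHom.mem_ker.mp hq, sub_zero] at h

theorem isPrime_span_X_image [IsDomain R] (s : Set σ) :
    (Ideal.span (X '' s : Set (MvPolynomial σ R))).IsPrime := by
  classical
  rw [span_X_image_eq_ker]
  exact RingHom.ker_isPrime _

theorem X_mem_span_X_image_iff [Nontrivial R] {s : Set σ} {a : σ} :
    (X a : MvPolynomial σ R) ∈ Ideal.span (X '' s) ↔ a ∈ s := by
  classical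
  rw [mem_ideal_span_X_image, support_X]
  simp [Finsupp.single_apply]

theorem span_X_image_le_iff [Nontrivial R] {s s' : Set σ} :
    Ideal.span (X '' s : Set (MvPolynomial σ R)) ≤ Ideal.span (X '' s') ↔ s ⊆ s' := by
  refine ⟨fun h a ha => X_mem_span_X_image_iff.mp (h (Ideal.subset_span ⟨a, ha, rfl⟩)),
    fun h => Ideal.span_mono (Set.image_mono h)⟩

end MvPolynomial

theorem Finsupp.sum_single_one_le {α ι : Type*} {s : Finset ι} {f : ι → α} {m : α →₀ ℕ}
    (hf : Set.InjOn f s) (hm : ∀ r ∈ s, m (f r) ≠ 0) : ∑ r ∈ s, Finsupp.single (f r) 1 ≤ m := by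
  classical
  rw [← Finset.sum_image (f := fun a => Finsupp.single a (1 : ℕ)) hf]
  intro a
  simp only [Finsupp.coe_finsetSum, Finset.sum_apply, Finsupp.single_apply, Finset.sum_ite_eq',
    Finset.mem_image]
  split_ifs with ha
  · obtain ⟨r, hr, rfl⟩ := ha
    exact Nat.one_le_iff_ne_zero.mpr (hm r hr)
  · exact Nat.zero_le _

namespace SpreadBorel

variable {n d e s : ℕ} {t j i l : ℕ → ℕ}

theorem add_sum_le_of_spread (hi : ∀ r, 1 ≤ r → r + 1 ≤ e → i r + t r ≤ i (r + 1))
    {a b : ℕ} (ha : 1 ≤ a) (hab : a ≤ b) (hb : b ≤ e) :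
    i a + ∑ k ∈ Finset.Ico a b, t k ≤ i b := by
  induction b, hab using Nat.le_induction with
  | base => simp
  | succ b hab ih =>
    rw [Finset.sum_Ico_succ_top hab]
    have := hi b (by omega) hb
    have := ih (by omega)
    omega

theorem add_le_of_spread (hi : ∀ r, 1 ≤ r → r + 1 ≤ e → i r + t r ≤ i (r + 1))
    {a b : ℕ} (ha : 1 ≤ a) (hab : a < b) (hb : b ≤ e) : i a + t a ≤ i b := by
  have hsum := add_sum_le_of_spread hi ha hab.le hb
  have : t a ≤ ∑ k ∈ Finset.Ico a b, t k :=
    Finset.single_le_sum (fun _ _ => Nat.zero_le _) (Finset.mem_Ico.mpr ⟨le_rfl, hab⟩)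
  omega

theorem le_of_spread (hi : ∀ r, 1 ≤ r → r + 1 ≤ e → i r + t r ≤ i (r + 1))
    {a b : ℕ} (ha : 1 ≤ a) (hab : a ≤ b) (hb : b ≤ e) : i a ≤ i b :=
  (Nat.le_add_right _ _).trans (add_sum_le_of_spread hi ha hab hb)

theorem strictMonoOn_of_spread (ht : ∀ k, 1 ≤ k → k + 1 ≤ e → 1 ≤ t k)
    (hi : ∀ r, 1 ≤ r → r + 1 ≤ e → i r + t r ≤ i (r + 1)) : StrictMonoOn i (Set.Icc 1 e) :=
  fun a ha b hb hab => by
    have := add_le_of_spread hi ha.1 hab hb.2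
    have := ht a ha.1 (by have := hb.2; omega)
    omega

theorem spreadIdx_anti {J : ℕ → ℕ} (h : e ≤ s) : spreadIdx s t J ⊆ spreadIdx e t J :=
  fun _ hi => ⟨fun r h1 h2 => hi.1 r h1 (h2.trans h), fun r h1 h2 => hi.2 r h1 (h2.trans h)⟩

theorem le_of_mem_spreadIdx (hj : j ∈ spreadIdx d t j) (hl : l ∈ spreadIdx s t j) (hsd : s ≤ d)
    {r : ℕ} (hr : 1 ≤ r) (hrs : r ≤ s) : l r ≤ j s :=
  (hl.1 r hr hrs).2.trans (le_of_spread hj.2 hr hrs hsd)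

theorem mem_tSupp {x : ℕ} :
    x ∈ tSupp e t l ↔ ∃ k, 1 ≤ k ∧ k + 1 ≤ e ∧ l k ≤ x ∧ x ≤ l k + t k - 1 := by
  simp only [tSupp, Set.mem_iUnion, Finset.mem_Icc, Set.mem_Icc, exists_prop]
  exact exists_congr fun k => by omega

theorem tSupp_subset_Ico (hj : j ∈ spreadIdx d t j) (hl : l ∈ spreadIdx s t j) (hsd : s ≤ d) :
    tSupp s t l ⊆ Set.Ico 1 (j s) := by
  intro x hx
  obtain ⟨k, hk1, hks, hkx, hxk⟩ := mem_tSupp.mp hx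
  have hlk := hl.1 k hk1 (by omega)
  have := add_le_of_spread hj.2 hk1 (show k < s by omega) hsd
  exact ⟨by omega, by omega⟩

theorem not_forall_mem_tSupp (he : 1 ≤ e) (ht : ∀ k, 1 ≤ k → k + 1 ≤ e → 1 ≤ t k)
    (hl : ∀ k, 1 ≤ k → k + 1 ≤ e → l k + t k ≤ l (k + 1))
    (hi : ∀ r, 1 ≤ r → r + 1 ≤ e → i r + t r ≤ i (r + 1)) :
    ¬ ∀ r, 1 ≤ r → r ≤ e → i r ∈ tSupp e t l := by
  intro hmem
  -- inductively `i r` lies beyond the first `r - 1` intervals, so `i e` lies beyond all of them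
  have key : ∀ r, 1 ≤ r → r ≤ e → ∀ k, 1 ≤ k → k < r → l k + t k ≤ i r := by
    intro r hr
    induction r, hr using Nat.le_induction with
    | base => intro _ k hk hk1; omega
    | succ r hr ih =>
      intro hre k hk hkr
      obtain ⟨f, hf1, hfe, hlf, hfi⟩ := mem_tSupp.mp (hmem r hr (by omega))
      have hstep := hi r hr hre
      have hrf : r ≤ f := by
        by_contra hfr
        have := ih (by omega) f hf1 (by omega)
        have := ht f hf1 hfe
        omega
      rcases (show k < r ∨ k = r by omega) with hkr | rfl
      · have := ih (by omega) k hk hkr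
        omega
      · have := le_of_spread (e := e - 1) (fun r h1 h2 => hl r h1 (by omega)) hk hrf (by omega)
        omega
  obtain ⟨f, hf1, hfe, -, hfi⟩ := mem_tSupp.mp (hmem e he le_rfl)
  have := key e he le_rfl f hf1 (by omega)
  have := ht f hf1 hfe
  omega

theorem tSupp_succ (he : 1 ≤ e) :
    tSupp (e + 1) t l = tSupp e t l ∪ Set.Icc (l e) (l e + t e - 1) := by
  ext x
  simp only [Set.mem_union, mem_tSupp, Set.mem_Icc]
  constructor
  · rintro ⟨k, hk1, hke, hk⟩
    rcases (show k + 1 ≤ e ∨ k = e by omega) with hk' | rfl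
    · exact Or.inl ⟨k, hk1, hk', hk⟩
    · exact Or.inr hk
  · rintro (⟨k, hk1, hke, hk⟩ | hx)
    · exact ⟨k, hk1, by omega, hk⟩
    · exact ⟨e, he, le_rfl, hx⟩

theorem tSupp_update {k v : ℕ} (hk : e ≤ k) : tSupp e t (Function.update l k v) = tSupp e t l := by
  ext x
  simp only [mem_tSupp]
  refine exists_congr fun r => and_congr_right fun _ => and_congr_right fun hr => ?_
  rw [Function.update_of_ne (by omega)]

theorem update_mem_spreadIdx (hl : l ∈ spreadIdx s t j) {v : ℕ} (hv : 1 ≤ v)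
    (hlv : l s + t s ≤ v) (hvj : v ≤ j (s + 1)) :
    Function.update l (s + 1) v ∈ spreadIdx (s + 1) t j := by
  refine ⟨fun r h1 h2 => ?_, fun r h1 h2 => ?_⟩
  · rcases (show r ≤ s ∨ r = s + 1 by omega) with hr | rfl
    · rw [Function.update_of_ne (by omega)]
      exact hl.1 r h1 hr
    · simpa using ⟨hv, hvj⟩
  · rw [Function.update_of_ne (by omega)]
    rcases (show r + 1 ≤ s ∨ r = s by omega) with hr | rfl
    · rw [Function.update_of_ne (by omega)]
      exact hl.2 r h1 hr
    · simpa using hlv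

/-- The family `𝒢`. For `s = d` it also contains the sets `supp_t(v)`, `v ∈ G(B_t(u))`: `supp_t`
ignores the last index and `[j d + 1, n] = ∅`. -/
def spreadFacets (n d : ℕ) (t j : ℕ → ℕ) : Set (Set ℕ) :=
  {G | ∃ s l, 1 ≤ s ∧ s ≤ d ∧ l ∈ spreadIdx s t j ∧ l s = j s ∧
    G = tSupp s t l ∪ Set.Icc (j s + 1) n}

theorem subset_Icc_of_mem_spreadFacets (hj : j ∈ spreadIdx d t j) (hjd : j d = n) {G : Set ℕ}
    (hG : G ∈ spreadFacets n d t j) : G ⊆ Set.Icc 1 n := by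
  obtain ⟨s, l, hs1, hsd, hl, -, rfl⟩ := hG
  have hjs : j s ≤ n := hjd ▸ le_of_spread hj.2 hs1 hsd le_rfl
  rintro x (hx | ⟨hx1, hxn⟩)
  · have := tSupp_subset_Ico hj hl hsd hx
    exact ⟨this.1, by have := this.2; omega⟩
  · exact ⟨by omega, hxn⟩

theorem exists_not_mem_facet (ht : ∀ k, 1 ≤ k → k + 1 ≤ d → 1 ≤ t k) (hj : j ∈ spreadIdx d t j)
    (hs : 1 ≤ s) (hsd : s ≤ d) (hi : i ∈ spreadIdx s t j) (hl : l ∈ spreadIdx s t j) :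
    ∃ r, 1 ≤ r ∧ r ≤ s ∧ i r ∉ tSupp s t l ∪ Set.Icc (j s + 1) n := by
  by_contra! h
  refine not_forall_mem_tSupp hs (fun k h1 h2 => ht k h1 (by omega)) hl.2 hi.2 fun r h1 h2 => ?_
  refine (h r h1 h2).resolve_right fun hr => ?_
  have := le_of_mem_spreadIdx hj hi hsd h1 h2
  exact absurd hr.1 (by omega)

theorem exists_not_mem_of_mem_spreadFacets (ht : ∀ k, 1 ≤ k → k + 1 ≤ d → 1 ≤ t k)
    (hj : j ∈ spreadIdx d t j) (hi : i ∈ spreadIdx d t j) {G : Set ℕ}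
    (hG : G ∈ spreadFacets n d t j) : ∃ r, 1 ≤ r ∧ r ≤ d ∧ i r ∉ G := by
  obtain ⟨s, l, hs1, hsd, hl, -, rfl⟩ := hG
  obtain ⟨r, hr1, hrs, hr⟩ := exists_not_mem_facet ht hj hs1 hsd (spreadIdx_anti hsd hi) hl
  exact ⟨r, hr1, hrs.trans hsd, hr⟩

theorem ncard_tSupp (ht : ∀ k, 1 ≤ k → k + 1 ≤ e → 1 ≤ t k)
    (hl : ∀ k, 1 ≤ k → k + 1 ≤ e → l k + t k ≤ l (k + 1)) :
    (tSupp e t l).ncard = ∑ k ∈ Finset.Ico 1 e, t k := by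
  have hIcc : Finset.Icc 1 (e - 1) = Finset.Ico 1 e := by
    ext k; simp only [Finset.mem_Icc, Finset.mem_Ico]; omega
  have hcoe : tSupp e t l =
      ↑((Finset.Ico 1 e).biUnion fun k => Finset.Icc (l k) (l k + t k - 1)) := by
    ext x; simp [tSupp, hIcc]
  have hdisj : (↑(Finset.Ico 1 e) : Set ℕ).PairwiseDisjoint
      fun k => Finset.Icc (l k) (l k + t k - 1) := by
    intro a ha b hb hab
    simp only [Finset.coe_Ico, Set.mem_Ico] at ha hb
    have hsp : ∀ a b, 1 ≤ a → a < b → b < e → l a + t a ≤ l b := fun a b h1 h2 h3 =>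
      add_le_of_spread (e := e - 1) (fun r h1 h2 => hl r h1 (by omega)) h1 h2 (by omega)
    rw [Function.onFun, Finset.disjoint_left]
    intro x hxa hxb
    simp only [Finset.mem_Icc] at hxa hxb
    rcases Nat.lt_or_gt_of_ne hab with h | h
    · have := hsp a b ha.1 h hb.2; have := ht a ha.1 (by omega); omega
    · have := hsp b a hb.1 h ha.2; have := ht b hb.1 (by omega); omega
  rw [hcoe, Set.ncard_coe_finset, Finset.card_biUnion hdisj]
  refine Finset.sum_congr rfl fun k hk => ?_
  have := ht k (Finset.mem_Ico.mp hk).1 (by have := (Finset.mem_Ico.mp hk).2; omega)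
  rw [Nat.card_Icc]
  omega

theorem ncard_facet_add (ht : ∀ k, 1 ≤ k → k + 1 ≤ d → 1 ≤ t k) (hj : j ∈ spreadIdx d t j)
    (hjd : j d = n) (hs : 1 ≤ s) (hsd : s ≤ d) (hl : l ∈ spreadIdx s t j) :
    (tSupp s t l ∪ Set.Icc (j s + 1) n).ncard + j s = ∑ k ∈ Finset.Ico 1 s, t k + n := by
  have hjs : j s ≤ n := hjd ▸ le_of_spread hj.2 hs hsd le_rfl
  have hdisj : Disjoint (tSupp s t l) (Set.Icc (j s + 1) n) :=
    Set.disjoint_left.mpr fun x hx hx' => by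
      have := (tSupp_subset_Ico hj hl hsd hx).2
      have := hx'.1
      omega
  rw [Set.ncard_union_eq hdisj (Set.finite_Ico 1 (j s) |>.subset (tSupp_subset_Ico hj hl hsd))
    (Set.finite_Icc _ _), ncard_tSupp (fun k h1 h2 => ht k h1 (by omega)) hl.2, ← Finset.coe_Icc,
    Set.ncard_coe_finset, Nat.card_Icc]
  omega

/-- Inclusion `G ⊆ G'` forces `s ≤ s'` (by pigeonhole), while `|G| + j s = ∑_{k < s} t k + n`
is non-increasing in `s` because `j` is `t`-spread. -/
theorem spreadFacets_isAntichain (ht : ∀ k, 1 ≤ k → k + 1 ≤ d → 1 ≤ t k)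
    (hj : j ∈ spreadIdx d t j) (hjd : j d = n) : IsAntichain (· ⊆ ·) (spreadFacets n d t j) := by
  rintro _ ⟨s, l, hs1, hsd, hl, -, rfl⟩ _ ⟨s', l', hs1', hsd', hl', hls', rfl⟩ hne hsub
  apply hne
  have hss' : s ≤ s' := by
    by_contra! h
    obtain ⟨r, hr1, hrs, hr⟩ :=
      exists_not_mem_facet ht hj hs1' hsd' (spreadIdx_anti h.le hl) hl'
    have := ht r hr1 (by omega)
    exact hr (hsub (Or.inl (mem_tSupp.mpr ⟨r, hr1, by omega, le_rfl, by omega⟩)))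
  have hcard := ncard_facet_add ht hj hjd hs1 hsd hl
  have hcard' := ncard_facet_add ht hj hjd hs1' hsd' hl'
  have hsum := Finset.sum_Ico_consecutive t hs1 hss'
  have hjss' := add_sum_le_of_spread hj.2 hs1 hss' hsd'
  exact Set.eq_of_subset_of_ncard_le hsub (by omega) ((Set.finite_Icc 1 n).subset
    (subset_Icc_of_mem_spreadFacets hj hjd ⟨s', l', hs1', hsd', hl', hls', rfl⟩))

/-- What the greedy choice `l 1 = min (T ∩ [1, j 1])`,
`l (r + 1) = min (T ∩ [l r + t r, j (r + 1)])` has produced after `s` steps: a sequence of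
`spreadIdx s t j` inside `T`, such that every point of `T` below `l s + t s` lies in
`supp_t(l 1 ⋯ l s)`. -/
def IsGreedyChain (T : Set ℕ) (t j : ℕ → ℕ) (s : ℕ) (l : ℕ → ℕ) : Prop :=
  l ∈ spreadIdx s t j ∧ (∀ r, 1 ≤ r → r ≤ s → l r ∈ T) ∧
    ∀ x ∈ T, x < l s + t s → x ∈ tSupp (s + 1) t l

variable {T : Set ℕ}

theorem exists_isGreedyChain_one_or (hd : 1 ≤ d) (hj : j ∈ spreadIdx d t j)
    (hT : T ⊆ Set.Icc 1 n) :
    (∃ l, IsGreedyChain T t j 1 l) ∨ ∃ G ∈ spreadFacets n d t j, T ⊆ G := by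
  by_cases hne : (T ∩ Set.Iic (j 1)).Nonempty
  · obtain ⟨hmT, hmj⟩ := Nat.sInf_mem hne
    set m := sInf (T ∩ Set.Iic (j 1))
    have hmin : ∀ x ∈ T, m ≤ x := fun x hx =>
      (le_or_gt x (j 1)).elim (fun h => Nat.sInf_le ⟨hx, h⟩) fun h => by
        have : m ≤ j 1 := hmj
        omega
    refine Or.inl ⟨fun _ => m, ⟨fun r h1 h2 => ?_, fun r h1 h2 => by omega⟩,
      fun r h1 h2 => by simpa using hmT, fun x hx hxm => ?_⟩
    · obtain rfl : r = 1 := by omega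
      exact ⟨(hT hmT).1, hmj⟩
    · have := hmin x hx
      exact mem_tSupp.mpr ⟨1, le_rfl, le_rfl, this, by dsimp only at hxm ⊢; omega⟩
  · refine Or.inr ⟨_, ⟨1, j, le_rfl, hd, spreadIdx_anti hd hj, rfl, rfl⟩, fun x hx => ?_⟩
    refine Or.inr ⟨?_, (hT hx).2⟩
    by_contra! h
    exact hne ⟨x, hx, Nat.le_of_lt_succ h⟩

theorem IsGreedyChain.succ_or (h : IsGreedyChain T t j s l) (hs : 1 ≤ s) (hsd : s + 1 ≤ d)
    (hj : j ∈ spreadIdx d t j) (hT : T ⊆ Set.Icc 1 n) :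
    (∃ l', IsGreedyChain T t j (s + 1) l') ∨ ∃ G ∈ spreadFacets n d t j, T ⊆ G := by
  obtain ⟨hl, hlT, hcov⟩ := h
  have hls : l s + t s ≤ j (s + 1) := by
    have := (hl.1 s hs le_rfl).2
    have := hj.2 s hs hsd
    omega
  by_cases hne : (T ∩ Set.Icc (l s + t s) (j (s + 1))).Nonempty
  · obtain ⟨hmT, hm1, hm2⟩ := Nat.sInf_mem hne
    set m := sInf (T ∩ Set.Icc (l s + t s) (j (s + 1)))
    refine Or.inl ⟨Function.update l (s + 1) m,
      update_mem_spreadIdx hl (hT hmT).1 hm1 hm2, fun r h1 h2 => ?_, fun x hx hxm => ?_⟩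
    · rcases (show r ≤ s ∨ r = s + 1 by omega) with hr | rfl
      · rw [Function.update_of_ne (by omega)]
        exact hlT r h1 hr
      · simpa using hmT
    · rw [tSupp_succ (by omega), tSupp_update le_rfl]
      rw [Function.update_self] at hxm ⊢
      by_cases hxs : x < l s + t s
      · exact Or.inl (hcov x hx hxs)
      · have hmx : m ≤ x := (le_or_gt x (j (s + 1))).elim
          (fun h => Nat.sInf_le ⟨hx, by omega, h⟩) fun h => by omega
        exact Or.inr ⟨hmx, by omega⟩
  · refine Or.inr ⟨_, ⟨s + 1, Function.update l (s + 1) (j (s + 1)), by omega, hsd,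
      update_mem_spreadIdx hl (by have := (hl.1 s hs le_rfl).1; omega) hls le_rfl, by simp, rfl⟩,
      fun x hx => ?_⟩
    rw [tSupp_update le_rfl]
    by_cases hxs : x < l s + t s
    · exact Or.inl (hcov x hx hxs)
    · refine Or.inr ⟨?_, (hT hx).2⟩
      by_contra! h
      exact hne ⟨x, hx, by omega, by omega⟩

theorem exists_spreadFacets_superset (hd : 1 ≤ d) (hj : j ∈ spreadIdx d t j)
    (hT : T ⊆ Set.Icc 1 n) (hno : ∀ i ∈ spreadIdx d t j, ∃ r, 1 ≤ r ∧ r ≤ d ∧ i r ∉ T) :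
    ∃ G ∈ spreadFacets n d t j, T ⊆ G := by
  have key : ∀ s, 1 ≤ s → s ≤ d →
      (∃ l, IsGreedyChain T t j s l) ∨ ∃ G ∈ spreadFacets n d t j, T ⊆ G := by
    intro s hs
    induction s, hs using Nat.le_induction with
    | base => exact fun _ => exists_isGreedyChain_one_or hd hj hT
    | succ s hs ih =>
      intro hsd
      rcases ih (by omega) with ⟨l, hl⟩ | hG
      · exact hl.succ_or hs hsd hj hT
      · exact Or.inr hG
  rcases key d hd le_rfl with ⟨l, hl, hlT, -⟩ | hG
  · obtain ⟨r, hr1, hrd, hr⟩ := hno l hl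
    exact absurd (hlT r hr1 hrd) hr
  · exact hG

variable {K : Type*} [Field K] [NeZero n] {A : Set ℕ}

def pos (n : ℕ) [NeZero n] (p : ℕ) : Fin n := Fin.ofNat n (p - 1)

theorem pos_injOn : Set.InjOn (pos n) (Set.Icc 1 n) := by
  intro p ⟨hp1, hpn⟩ q ⟨hq1, hqn⟩ h
  have := congrArg Fin.val h
  simp only [pos, Fin.val_ofNat, Nat.mod_eq_of_lt (show p - 1 < n by omega),
    Nat.mod_eq_of_lt (show q - 1 < n by omega)] at this
  omega

theorem pA_eq_span (A : Set ℕ) : pA K n A = Ideal.span (X '' (pos n '' A)) := by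
  rw [pA, Set.image_image]
  rfl

theorem isPrime_pA (A : Set ℕ) : (pA K n A).IsPrime := by
  rw [pA_eq_span]
  exact isPrime_span_X_image _

theorem pA_le_pA_iff {B : Set ℕ} (hA : A ⊆ Set.Icc 1 n) (hB : B ⊆ Set.Icc 1 n) :
    pA K n A ≤ pA K n B ↔ A ⊆ B := by
  rw [pA_eq_span, pA_eq_span, span_X_image_le_iff, pos_injOn.image_subset_image_iff hA hB]

theorem mem_pA_iff {q : MvPolynomial (Fin n) K} :
    q ∈ pA K n A ↔ ∀ m ∈ q.support, ∃ p ∈ A, m (pos n p) ≠ 0 := by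
  simp [pA_eq_span, mem_ideal_span_X_image]

theorem monOf_mem_pA {r : ℕ} (hr : r ∈ Finset.Icc 1 e) (hA : i r ∈ A) :
    monOf K n e i ∈ pA K n A := by
  rw [monOf, ← Finset.mul_prod_erase _ _ hr]
  exact Ideal.mul_mem_right _ _ (Ideal.subset_span ⟨i r, hA, rfl⟩)

theorem monOf_eq_monomial :
    monOf K n e i = monomial (∑ r ∈ Finset.Icc 1 e, Finsupp.single (pos n (i r)) 1) 1 := by
  rw [monomial_sum_one, monOf]
  rfl

theorem mem_tBorel_of_forall_exists (ht : ∀ k, 1 ≤ k → k + 1 ≤ d → 1 ≤ t k)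
    (hj : j ∈ spreadIdx d t j) (hjd : j d = n) {q : MvPolynomial (Fin n) K}
    (h : ∀ m ∈ q.support, ∃ i ∈ spreadIdx d t j, ∀ r, 1 ≤ r → r ≤ d → m (pos n (i r)) ≠ 0) :
    q ∈ tBorel K n d t j := by
  rw [tBorel, Set.image_congr fun i _ => monOf_eq_monomial,
    ← Set.image_image (g := (monomial · 1)), mem_ideal_span_monomial_image]
  intro m hm
  obtain ⟨i, hi, him⟩ := h m hm
  refine ⟨_, ⟨i, hi, rfl⟩, Finsupp.sum_single_one_le ?_ fun r hr => him r
    (Finset.mem_Icc.mp hr).1 (Finset.mem_Icc.mp hr).2⟩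
  rw [Finset.coe_Icc]
  exact pos_injOn.comp (strictMonoOn_of_spread ht hi.2).injOn fun r hr =>
    ⟨(hi.1 r hr.1 hr.2).1, hjd ▸ le_of_mem_spreadIdx hj hi le_rfl hr.1 hr.2⟩

theorem tBorel_eq_sInf (hd : 1 ≤ d) (ht : ∀ k, 1 ≤ k → k + 1 ≤ d → 1 ≤ t k)
    (hj : j ∈ spreadIdx d t j) (hjd : j d = n) :
    tBorel K n d t j = sInf ((fun G => pA K n (Set.Icc 1 n \ G)) '' spreadFacets n d t j) := by
  apply le_antisymm
  · refine le_sInf ?_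
    rintro _ ⟨G, hG, rfl⟩
    rw [tBorel, Ideal.span_le]
    rintro _ ⟨i, hi, rfl⟩
    obtain ⟨r, hr1, hrd, hr⟩ := exists_not_mem_of_mem_spreadFacets ht hj hi hG
    exact monOf_mem_pA (Finset.mem_Icc.mpr ⟨hr1, hrd⟩)
      ⟨⟨(hi.1 r hr1 hrd).1, hjd ▸ le_of_mem_spreadIdx hj hi le_rfl hr1 hrd⟩, hr⟩
  · intro q hq
    refine mem_tBorel_of_forall_exists ht hj hjd fun m hm => ?_
    by_contra! hno
    obtain ⟨G, hG, hTG⟩ := exists_spreadFacets_superset hd hj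
      (T := {p | p ∈ Set.Icc 1 n ∧ m (pos n p) ≠ 0}) (fun p hp => hp.1) fun i hi => by
        obtain ⟨r, hr1, hrd, hr⟩ := hno i hi
        exact ⟨r, hr1, hrd, fun h => h.2 hr⟩
    obtain ⟨p, ⟨hp, hpG⟩, hmp⟩ := mem_pA_iff.mp (Ideal.mem_sInf.mp hq ⟨G, hG, rfl⟩) m hm
    exact hpG (hTG ⟨hp, hmp⟩)

theorem isAntichain_image_pA (ht : ∀ k, 1 ≤ k → k + 1 ≤ d → 1 ≤ t k)
    (hj : j ∈ spreadIdx d t j) (hjd : j d = n) :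
    IsAntichain (· ≤ ·) ((fun G => pA K n (Set.Icc 1 n \ G)) '' spreadFacets n d t j) := by
  rintro _ ⟨G, hG, rfl⟩ _ ⟨G', hG', rfl⟩ hne hle
  rw [pA_le_pA_iff Set.sdiff_subset Set.sdiff_subset, Set.sdiff_subset_sdiff_iff_subset
    (subset_Icc_of_mem_spreadFacets hj hjd hG) (subset_Icc_of_mem_spreadFacets hj hjd hG')] at hle
  exact hne (by rw [(spreadFacets_isAntichain ht hj hjd).eq hG' hG hle])

theorem decompPrimes_eq (hd : 2 ≤ d) (hj : j ∈ spreadIdx d t j) (hjd : j d = n) :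
    decompPrimes K n d t j = (fun G => pA K n (Set.Icc 1 n \ G)) '' spreadFacets n d t j := by
  ext P
  constructor
  · rintro (⟨s, hs1, hsd, i, hi, his, rfl⟩ | ⟨i, hi, rfl⟩)
    · exact ⟨_, ⟨s, i, hs1, hsd, hi, his, rfl⟩, rfl⟩
    · obtain ⟨d, rfl⟩ : ∃ d', d = d' + 1 := ⟨d - 1, by omega⟩
      have hid : i d + t d ≤ j (d + 1) := by
        have := (hi.1 d (by omega) (by omega)).2
        have := hj.2 d (by omega) le_rfl
        omega
      refine ⟨_, ⟨d + 1, Function.update i (d + 1) (j (d + 1)), by omega, le_rfl,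
        update_mem_spreadIdx (spreadIdx_anti (by omega) hi) (hj.1 (d + 1) (by omega) le_rfl).1 hid
          le_rfl, by simp, rfl⟩, ?_⟩
      rw [tSupp_update le_rfl, hjd, Set.Icc_eq_empty_of_lt (Nat.lt_succ_self n), Set.union_empty]
  · rintro ⟨G, ⟨s, l, hs1, hsd, hl, hls, rfl⟩, rfl⟩
    exact Or.inl ⟨s, hs1, hsd, l, hl, hls, rfl⟩

end SpreadBorel

open SpreadBorel

theorem stmt0_general (K : Type*) [Field K] (n d : ℕ) [NeZero n] (t j : ℕ → ℕ)
    (hd : 2 ≤ d) (ht : ∀ k, 1 ≤ k → k ≤ d - 1 → 1 ≤ t k)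
    (hj1 : 1 ≤ j 1)
    (hjd : j d = n) (hspread : ∀ k, 1 ≤ k → k ≤ d - 1 → j k + t k ≤ j (k + 1)) :
    tBorel K n d t j = sInf (decompPrimes K n d t j) ∧
    (tBorel K n d t j).minimalPrimes = decompPrimes K n d t j ∧
    ∀ P ∈ decompPrimes K n d t j,
      ¬ sInf (decompPrimes K n d t j \ {P}) ≤ tBorel K n d t j := by
  have ht' : ∀ k, 1 ≤ k → k + 1 ≤ d → 1 ≤ t k := fun k h1 h2 => ht k h1 (by omega)
  have hspread' : ∀ k, 1 ≤ k → k + 1 ≤ d → j k + t k ≤ j (k + 1) :=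
    fun k h1 h2 => hspread k h1 (by omega)
  have hj : j ∈ spreadIdx d t j :=
    ⟨fun r h1 h2 => ⟨hj1.trans (le_of_spread hspread' le_rfl h1 h2), le_rfl⟩, hspread'⟩
  have hF := decompPrimes_eq (K := K) hd hj hjd
  have hI : tBorel K n d t j = sInf (decompPrimes K n d t j) :=
    hF ▸ tBorel_eq_sInf (by omega) ht' hj hjd
  have hfin : (decompPrimes K n d t j).Finite := hF ▸ Set.Finite.image _
    ((Set.finite_Icc 1 n).finite_subsets.subset fun _ => subset_Icc_of_mem_spreadFacets hj hjd)
  have hprime : ∀ P ∈ decompPrimes K n d t j, P.IsPrime := by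
    rw [hF]
    rintro _ ⟨G, -, rfl⟩
    exact isPrime_pA _
  have hanti := hF ▸ isAntichain_image_pA (K := K) ht' hj hjd
  refine ⟨hI, hI ▸ Ideal.minimalPrimes_sInf_of_isAntichain hfin hprime hanti, fun P hP h => ?_⟩
  exact Ideal.not_sInf_diff_singleton_le_of_isAntichain hfin hprime hanti hP
    (h.trans (hI ▸ sInf_le hP))

/-- **Theorem (minimal primary decomposition of `B_t(u)`).**
`B_t(u) = (⋂_{G ∈ 𝒢} P_{[n]∖G}) ∩ (⋂_{v ∈ G(B_t(u))} P_{[n]∖supp_t(v)})`; these primes are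
exactly the minimal primes of `B_t(u)`, and the intersection is irredundant. -/
theorem stmt0 (K : Type*) [Field K] (n d : ℕ) [NeZero n] (t j : ℕ → ℕ)
    (hd : 2 ≤ d) (ht : ∀ k, 1 ≤ k → k ≤ d - 1 → 1 ≤ t k)
    (hj1 : 1 ≤ j 1) (hjmono : ∀ p q, 1 ≤ p → p < q → q ≤ d → j p < j q)
    (hjd : j d = n) (hspread : ∀ k, 1 ≤ k → k ≤ d - 1 → j k + t k ≤ j (k + 1)) :
    tBorel K n d t j = sInf (decompPrimes K n d t j) ∧
    (tBorel K n d t j).minimalPrimes = decompPrimes K n d t j ∧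
    ∀ P ∈ decompPrimes K n d t j,
      ¬ sInf (decompPrimes K n d t j \ {P}) ≤ tBorel K n d t j :=
  stmt0_general K n d t j hd ht hj1 hjd hspread
end

section
/- Let Δ be the simplicial complex on the vertex set [n] whose faces are the subsets F ⊆ [n] such that the squarefree monomial prod_{i in F} x_i does not lie in B_t(u) (so B_t(u) is the Stanley-Reisner ideal of Δ). Then Δ is vertex decomposable. -/
open Finset MvPolynomial

/-!
Since `t_k ≥ 1`, a squarefree monomial `∏_{p ∈ F} x_p` lies in `B_t(u)` exactly when `F` contains
a `t`-spread chain `c_1 < ⋯ < c_d` with `c_r ≤ j_r`, so `Δ` is the complex of chain-free subsets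
of `[n]`. We show more generally that the complex of subsets of `A` containing no such chain with
entries in `[μ, b_r]` is vertex decomposable, by shedding the vertex `μ`: the deletion is the same
kind of complex with `μ + 1` in place of `μ`, and the link is the complex for the chains of length
`e - 1` obtained by dropping the first entry. If `F` is a facet of the deletion and `insert μ F`
were chain-free, let `w > μ` be the least vertex missing from `F`; maximality gives a chain in
`insert w F`, and lowering its entries `≤ w` by one yields a chain in `insert μ F`.
-/

def IsSpread (e : ℕ) (s c : ℕ → ℕ) : Prop :=
  ∀ r, 1 ≤ r → r + 1 ≤ e → c r + s r ≤ c (r + 1)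

def HasSpreadChain (e : ℕ) (s b : ℕ → ℕ) (μ : ℕ) (F : Finset ℕ) : Prop :=
  ∃ c, IsSpread e s c ∧ ∀ r, 1 ≤ r → r ≤ e → c r ∈ F ∧ μ ≤ c r ∧ c r ≤ b r

def chainFreeComplex (A : Finset ℕ) (e : ℕ) (s b : ℕ → ℕ) (μ : ℕ) : Set (Finset ℕ) :=
  {F | F ⊆ A ∧ ¬ HasSpreadChain e s b μ F}

section SpreadChain

variable {e : ℕ} {s b c : ℕ → ℕ} {μ : ℕ} {A F G : Finset ℕ}

lemma IsSpread.le (hc : IsSpread e s c) {p q : ℕ} (hp : 1 ≤ p) (hpq : p ≤ q) (hq : q ≤ e) :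
    c p ≤ c q := by
  induction q, hpq using Nat.le_induction with
  | base => rfl
  | succ q hpq ih => exact (ih (by omega)).trans (le_of_add_le_left (hc q (by omega) hq))

lemma IsSpread.strictMonoOn (hc : IsSpread e s c) (hs : ∀ r, 1 ≤ r → r + 1 ≤ e → 1 ≤ s r) :
    StrictMonoOn c (Set.Icc 1 e) := fun p hp q hq hpq => by
  rw [Set.mem_Icc] at hp hq
  have := hc p hp.1 (by omega)
  have := hs p hp.1 (by omega)
  have := hc.le (p := p + 1) (by omega) hpq hq.2
  omega

lemma HasSpreadChain.mono (h : HasSpreadChain e s b μ F) (hFG : F ⊆ G) :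
    HasSpreadChain e s b μ G := by
  obtain ⟨c, hc, hmem⟩ := h
  exact ⟨c, hc, fun r h1 h2 => ⟨hFG (hmem r h1 h2).1, (hmem r h1 h2).2⟩⟩

lemma hasSpreadChain_zero : HasSpreadChain 0 s b μ F :=
  ⟨fun _ => 0, fun r _ _ => by omega, fun r _ _ => by omega⟩

lemma hasSpreadChain_succ_iff (hμ : μ ∉ F) :
    HasSpreadChain e s b (μ + 1) F ↔ HasSpreadChain e s b μ F := by
  constructor
  · rintro ⟨c, hc, hmem⟩
    refine ⟨c, hc, fun r h1 h2 => ?_⟩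
    obtain ⟨hcF, hμc, hcb⟩ := hmem r h1 h2
    exact ⟨hcF, by omega, hcb⟩
  · rintro ⟨c, hc, hmem⟩
    refine ⟨c, hc, fun r h1 h2 => ?_⟩
    obtain ⟨hcF, hμc, hcb⟩ := hmem r h1 h2
    have : c r ≠ μ := fun h => hμ (h ▸ hcF)
    exact ⟨hcF, by omega, hcb⟩

/-- Such a chain in `insert μ F` may be taken to start at `μ`; the rest of it lies in `F`. -/
lemma hasSpreadChain_insert_iff (he : 2 ≤ e) (hs : 1 ≤ s 1) (hμb : μ ≤ b 1) :
    HasSpreadChain e s b μ (insert μ F) ↔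
      HasSpreadChain (e - 1) (fun r => s (r + 1)) (fun r => b (r + 1)) (μ + s 1) F := by
  constructor
  · rintro ⟨c, hc, hmem⟩
    refine ⟨fun r => c (r + 1), fun r h1 h2 => hc (r + 1) (by omega) (by omega), fun r h1 h2 => ?_⟩
    obtain ⟨hcF, -, hcb⟩ := hmem (r + 1) (by omega) (by omega)
    have := (hmem 1 le_rfl (by omega)).2.1
    have : c 1 + s 1 ≤ c 2 := hc 1 le_rfl he
    have := hc.le (p := 2) (q := r + 1) (by omega) (by omega) (by omega)
    dsimp only
    exact ⟨(mem_insert.1 hcF).resolve_left (by omega), by omega, hcb⟩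
  · rintro ⟨d, hd, hmem⟩
    refine ⟨fun r => if r ≤ 1 then μ else d (r - 1), fun r h1 h2 => ?_, fun r h1 h2 => ?_⟩
    · rcases r with _ | _ | r
      · omega
      · simpa using (hmem 1 le_rfl (by omega)).2.1
      · simpa using hd (r + 1) (by omega) (by omega)
    · rcases r with _ | _ | r
      · omega
      · simpa using hμb
      · have := hmem (r + 1) (by omega) (by omega)
        simp only [show ¬ r + 2 ≤ 1 by omega, if_false, Nat.add_sub_cancel]
        exact ⟨mem_insert_of_mem this.1, by omega, this.2.2⟩

/-- Lower by one every entry `≤ w` of the chain. -/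
lemma HasSpreadChain.lower (h : HasSpreadChain e s b μ G) (hμ : μ ∉ G) {w : ℕ} {H : Finset ℕ}
    (hhigh : ∀ x ∈ G, w < x → x ∈ H) (hlow : ∀ x, μ ≤ x → x < w → x ∈ H) :
    HasSpreadChain e s b μ H := by
  obtain ⟨c, hc, hmem⟩ := h
  have hμc : ∀ r, 1 ≤ r → r ≤ e → μ < c r := fun r h1 h2 => by
    obtain ⟨hcG, hμc, -⟩ := hmem r h1 h2
    exact lt_of_le_of_ne hμc fun h => hμ (h ▸ hcG)
  refine ⟨fun r => if c r ≤ w then c r - 1 else c r, fun r h1 h2 => ?_, fun r h1 h2 => ?_⟩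
  · have := hc r h1 h2
    have := hμc r h1 (by omega)
    dsimp only
    split_ifs <;> omega
  · have := hμc r h1 h2
    obtain ⟨hcG, -, hcb⟩ := hmem r h1 h2
    dsimp only
    split_ifs with hw
    · exact ⟨hlow _ (by omega) (by omega), by omega, by omega⟩
    · exact ⟨hhigh _ hcG (by omega), by omega, hcb⟩

lemma chainFreeComplex_zero : chainFreeComplex A 0 s b μ = ∅ :=
  Set.eq_empty_iff_forall_notMem.2 fun _ hF => hF.2 hasSpreadChain_zero

lemma chainFreeComplex_one :
    chainFreeComplex A 1 s b μ = {F | F ⊆ A.filter fun x => x < μ ∨ b 1 < x} := by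
  ext F
  simp only [chainFreeComplex, Set.mem_ofPred_eq, subset_iff, mem_filter]
  constructor
  · rintro ⟨hFA, hno⟩ x hx
    refine ⟨hFA hx, ?_⟩
    by_contra! hxμ
    refine hno ⟨fun _ => x, fun r _ _ => by omega, fun r h1 h2 => ?_⟩
    obtain rfl : r = 1 := by omega
    exact ⟨hx, hxμ⟩
  · intro hF
    refine ⟨fun x hx => (hF hx).1, ?_⟩
    rintro ⟨c, -, hmem⟩
    obtain ⟨hcF, hμc, hcb⟩ := hmem 1 le_rfl le_rfl
    have := (hF hcF).2
    omega

lemma chainFreeComplex_of_not_hasSpreadChain (h : ¬ HasSpreadChain e s b μ A) :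
    chainFreeComplex A e s b μ = {F | F ⊆ A} :=
  Set.ext fun _ => and_iff_left_of_imp fun hFA hF => h (hF.mono hFA)

lemma chainFreeComplex_deletion :
    {F ∈ chainFreeComplex A e s b μ | μ ∉ F} = chainFreeComplex (A.erase μ) e s b (μ + 1) := by
  ext F
  simp only [chainFreeComplex, Set.mem_ofPred_eq, subset_erase]
  constructor
  · rintro ⟨⟨hFA, hno⟩, hμ⟩
    exact ⟨⟨hFA, hμ⟩, by rwa [hasSpreadChain_succ_iff hμ]⟩
  · rintro ⟨⟨hFA, hμ⟩, hno⟩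
    exact ⟨⟨hFA, by rwa [← hasSpreadChain_succ_iff hμ]⟩, hμ⟩

lemma chainFreeComplex_link (he : 2 ≤ e) (hs : 1 ≤ s 1) (hμb : μ ≤ b 1) (hμA : μ ∈ A) :
    {F | F ∈ chainFreeComplex A e s b μ ∧ μ ∉ F ∧ insert μ F ∈ chainFreeComplex A e s b μ} =
      chainFreeComplex (A.erase μ) (e - 1) (fun r => s (r + 1)) (fun r => b (r + 1))
        (μ + s 1) := by
  ext F
  simp only [chainFreeComplex, Set.mem_ofPred_eq, subset_erase, insert_subset_iff]
  constructor
  · rintro ⟨-, hμ, ⟨-, hFA⟩, hno⟩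
    exact ⟨⟨hFA, hμ⟩, by rwa [← hasSpreadChain_insert_iff he hs hμb]⟩
  · rintro ⟨⟨hFA, hμ⟩, hno⟩
    rw [← hasSpreadChain_insert_iff he hs hμb] at hno
    exact ⟨⟨hFA, fun h => hno (h.mono (subset_insert μ F))⟩, hμ, ⟨hμA, hFA⟩, hno⟩

lemma hasSpreadChain_insert_of_isFacet_deletion
    (hF : isFacet {F ∈ chainFreeComplex A e s b μ | μ ∉ F} F) {x : ℕ} (hxA : x ∈ A)
    (hxμ : x ≠ μ) (hxF : x ∉ F) : HasSpreadChain e s b μ (insert x F) := by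
  by_contra hno
  have hmem : insert x F ∈ {F ∈ chainFreeComplex A e s b μ | μ ∉ F} :=
    ⟨⟨insert_subset hxA hF.1.1.1, hno⟩, by simpa [Ne.symm hxμ] using hF.1.2⟩
  exact hxF (hF.2 _ hmem (subset_insert x F) ▸ mem_insert_self x F)

lemma hasSpreadChain_insert_self_of_isFacet_deletion {N : ℕ} (hA : Icc μ N ⊆ A)
    (hb : ∀ r, 1 ≤ r → r ≤ e → b r ≤ N) (hchain : HasSpreadChain e s b μ A)
    (hF : isFacet {F ∈ chainFreeComplex A e s b μ | μ ∉ F} F) :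
    HasSpreadChain e s b μ (insert μ F) := by
  set W := (Icc (μ + 1) N).filter (· ∉ F)
  by_cases hW : W.Nonempty
  · obtain ⟨hwI, hwF⟩ := mem_filter.1 (W.min'_mem hW)
    rw [mem_Icc] at hwI
    have hμF : μ ∉ insert (W.min' hW) F := by simpa [show μ ≠ W.min' hW by omega] using hF.1.2
    refine (hasSpreadChain_insert_of_isFacet_deletion hF (hA (mem_Icc.2 ⟨by omega, hwI.2⟩))
      (by omega) hwF).lower hμF (w := W.min' hW) (fun x hx hwx => ?_) (fun x hμx hxw => ?_)
    · exact mem_insert_of_mem ((mem_insert.1 hx).resolve_left (by omega))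
    · rcases Nat.eq_or_lt_of_le hμx with rfl | hμx
      · exact mem_insert_self _ F
      · by_contra hx
        have hxW : x ∈ W :=
          mem_filter.2 ⟨mem_Icc.2 ⟨hμx, by omega⟩, fun h => hx (mem_insert_of_mem h)⟩
        have := W.min'_le x hxW
        omega
  · obtain ⟨c, hc, hmem⟩ := hchain
    refine ⟨c, hc, fun r h1 h2 => ?_⟩
    obtain ⟨-, hμc, hcb⟩ := hmem r h1 h2
    refine ⟨?_, hμc, hcb⟩
    rcases Nat.eq_or_lt_of_le hμc with hμc | hμc
    · exact hμc ▸ mem_insert_self μ F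
    · by_contra hcF
      exact hW ⟨c r, mem_filter.2 ⟨mem_Icc.2 ⟨hμc, (hcb.trans (hb r h1 h2))⟩,
        fun h => hcF (mem_insert_of_mem h)⟩⟩

lemma isFacet_of_isFacet_deletion {N : ℕ} (hA : Icc μ N ⊆ A)
    (hb : ∀ r, 1 ≤ r → r ≤ e → b r ≤ N) (hchain : HasSpreadChain e s b μ A)
    (hF : isFacet {F ∈ chainFreeComplex A e s b μ | μ ∉ F} F) :
    isFacet (chainFreeComplex A e s b μ) F := by
  refine ⟨hF.1.1, fun G hG hFG => ?_⟩
  by_cases hμG : μ ∈ G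
  · exact absurd ((hasSpreadChain_insert_self_of_isFacet_deletion hA hb hchain hF).mono
      (insert_subset hμG hFG)) hG.2
  · exact hF.2 G ⟨hG, hμG⟩ hFG

theorem vdecomp_chainFreeComplex (N : ℕ) (A : Finset ℕ) (e : ℕ) (s b : ℕ → ℕ) (μ : ℕ)
    (hs : ∀ r, 1 ≤ r → r + 1 ≤ e → 1 ≤ s r) (hb : ∀ r, 1 ≤ r → r ≤ e → b r ≤ N)
    (hA : Icc μ N ⊆ A) : VDecomp (chainFreeComplex A e s b μ) := by
  obtain rfl | rfl | he : e = 0 ∨ e = 1 ∨ 2 ≤ e := by omega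
  · exact chainFreeComplex_zero ▸ VDecomp.empty
  · exact chainFreeComplex_one ▸ VDecomp.simplex _
  by_cases hchain : HasSpreadChain e s b μ A
  swap
  · exact chainFreeComplex_of_not_hasSpreadChain hchain ▸ VDecomp.simplex A
  have hμb : μ ≤ b 1 := by
    obtain ⟨c, -, hmem⟩ := hchain
    have := hmem 1 le_rfl (by omega)
    omega
  have hμN : μ ≤ N := hμb.trans (hb 1 le_rfl (by omega))
  have hμA : μ ∈ A := hA (mem_Icc.2 ⟨le_rfl, hμN⟩)
  have hs1 : 1 ≤ s 1 := hs 1 le_rfl he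
  have hA' : ∀ ν, μ < ν → Icc ν N ⊆ A.erase μ := fun ν hν x hx =>
    mem_erase.2 ⟨by rw [mem_Icc] at hx; omega, hA (Icc_subset_Icc_left hν.le hx)⟩
  have hsingleton : {μ} ∈ chainFreeComplex A e s b μ := by
    refine ⟨singleton_subset_iff.2 hμA, ?_⟩
    rintro ⟨c, hc, hmem⟩
    have h1 := mem_singleton.1 (hmem 1 le_rfl (by omega)).1
    have h2 := mem_singleton.1 (hmem 2 (by omega) he).1
    have : c 1 + s 1 ≤ c 2 := hc 1 le_rfl he
    omega
  refine VDecomp.step _ μ ⟨{μ}, hsingleton, mem_singleton_self μ⟩ ?_ ?_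
    fun F hF => isFacet_of_isFacet_deletion hA hb hchain hF
  · rw [chainFreeComplex_deletion]
    exact vdecomp_chainFreeComplex N _ e s b (μ + 1) hs hb (hA' _ (by omega))
  · rw [chainFreeComplex_link he hs1 hμb hμA]
    exact vdecomp_chainFreeComplex N _ (e - 1) _ _ (μ + s 1)
      (fun r h1 h2 => hs (r + 1) (by omega) (by omega))
      (fun r h1 h2 => hb (r + 1) (by omega) (by omega)) (hA' _ (by omega))
termination_by N + 1 - μ

end SpreadChain

section MonomialIdeal

variable {K : Type*} [Field K] {n : ℕ} [NeZero n]

lemma prod_xv_eq_monomial (S : Finset ℕ) (g : ℕ → ℕ) :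
    ∏ p ∈ S, xv K n (g p) =
      monomial (∑ p ∈ S, Finsupp.single (Fin.ofNat n (g p - 1)) 1) (1 : K) := by
  rw [monomial_sum_one]
  rfl

lemma xv_dvd_prod_xv_iff {q : ℕ} (hq : q ∈ Icc 1 n) {F : Finset ℕ} (hF : F ⊆ Icc 1 n) :
    xv K n q ∣ ∏ p ∈ F, xv K n p ↔ q ∈ F := by
  refine ⟨fun h => ?_, dvd_prod_of_mem _⟩
  obtain ⟨p, hp, hqp⟩ := (X_prime (σ := Fin n) (R := K)).dvd_finsetProd_iff _ |>.1 h
  have hqp := congrArg Fin.val (X_dvd_X.1 hqp)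
  have hpn := mem_Icc.1 (hF hp)
  rw [mem_Icc] at hq
  rw [Fin.val_ofNat, Fin.val_ofNat, Nat.mod_eq_of_lt (by omega), Nat.mod_eq_of_lt (by omega)]
    at hqp
  exact (show q = p by omega) ▸ hp

lemma tBorel_eq_span_monomial (d : ℕ) (t j : ℕ → ℕ) :
    tBorel K n d t j = Ideal.span ((fun m => monomial m (1 : K)) ''
      ((fun i => ∑ r ∈ Icc 1 d, Finsupp.single (Fin.ofNat n (i r - 1)) 1) '' spreadIdx d t j)) := by
  rw [Set.image_image]
  simp only [tBorel, monOf, prod_xv_eq_monomial]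

lemma exists_monOf_dvd_of_prod_xv_mem_tBorel {d : ℕ} {t j : ℕ → ℕ} {F : Finset ℕ}
    (h : (∏ p ∈ F, xv K n p) ∈ tBorel K n d t j) :
    ∃ i ∈ spreadIdx d t j, monOf K n d i ∣ ∏ p ∈ F, xv K n p := by
  have hprod : ∏ p ∈ F, xv K n p = _ := prod_xv_eq_monomial F id
  rw [tBorel_eq_span_monomial, hprod, mem_ideal_span_monomial_image] at h
  obtain ⟨-, ⟨i, hi, rfl⟩, hle⟩ :=
    h _ (mem_support_iff.2 (by rw [coeff_monomial, if_pos rfl]; exact one_ne_zero))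
  refine ⟨i, hi, ?_⟩
  rw [monOf, prod_xv_eq_monomial, hprod]
  exact monomial_one_dvd_monomial_one.2 hle

lemma mem_tBorel_iff {d : ℕ} {t j : ℕ → ℕ} (ht : ∀ r, 1 ≤ r → r + 1 ≤ d → 1 ≤ t r)
    (hj : ∀ r, 1 ≤ r → r ≤ d → j r ≤ n) {F : Finset ℕ} (hF : F ⊆ Icc 1 n) :
    (∏ p ∈ F, xv K n p) ∈ tBorel K n d t j ↔ HasSpreadChain d t j 1 F := by
  constructor
  · intro h
    obtain ⟨i, ⟨hi, hspread⟩, hdvd⟩ := exists_monOf_dvd_of_prod_xv_mem_tBorel h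
    refine ⟨i, hspread, fun r h1 h2 => ⟨?_, hi r h1 h2⟩⟩
    have hxv : xv K n (i r) ∣ monOf K n d i :=
      dvd_prod_of_mem (fun r => xv K n (i r)) (mem_Icc.2 ⟨h1, h2⟩)
    exact (xv_dvd_prod_xv_iff (mem_Icc.2 ⟨(hi r h1 h2).1, (hi r h1 h2).2.trans (hj r h1 h2)⟩)
      hF).1 (hxv.trans hdvd)
  · rintro ⟨c, hc, hmem⟩
    have hgen : monOf K n d c ∈ tBorel K n d t j :=
      Ideal.subset_span ⟨c, ⟨fun r h1 h2 => (hmem r h1 h2).2, hc⟩, rfl⟩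
    have hsub : (Icc 1 d).image c ⊆ F := fun x hx => by
      obtain ⟨r, hr, rfl⟩ := mem_image.1 hx
      exact (hmem r (mem_Icc.1 hr).1 (mem_Icc.1 hr).2).1
    have hinj : Set.InjOn c (Icc 1 d : Set ℕ) := by
      rw [coe_Icc]
      exact (hc.strictMonoOn ht).injOn
    rw [← prod_sdiff hsub, prod_image hinj]
    exact Ideal.mul_mem_left _ _ hgen

end MonomialIdeal

theorem stmt7_general (K : Type*) [Field K] (n d : ℕ) [NeZero n] (t j : ℕ → ℕ)
    (ht : ∀ k, 1 ≤ k → k ≤ d - 1 → 1 ≤ t k)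
    (hjd : j d = n) (hspread : ∀ k, 1 ≤ k → k ≤ d - 1 → j k + t k ≤ j (k + 1)) :
    VDecomp {F : Finset ℕ | F ⊆ Finset.Icc 1 n ∧
      (∏ p ∈ F, xv K n p) ∉ tBorel K n d t j} := by
  have ht' : ∀ r, 1 ≤ r → r + 1 ≤ d → 1 ≤ t r := fun r h1 h2 => ht r h1 (by omega)
  have hj : IsSpread d t j := fun r h1 h2 => hspread r h1 (by omega)
  have hjn : ∀ r, 1 ≤ r → r ≤ d → j r ≤ n := fun r h1 h2 => hjd ▸ hj.le h1 h2 le_rfl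
  have hΔ : {F : Finset ℕ | F ⊆ Icc 1 n ∧ (∏ p ∈ F, xv K n p) ∉ tBorel K n d t j} =
      chainFreeComplex (Icc 1 n) d t j 1 :=
    Set.ext fun F => and_congr_right fun hF => not_congr (mem_tBorel_iff ht' hjn hF)
  rw [hΔ]
  exact vdecomp_chainFreeComplex n _ d t j 1 ht' hjn subset_rfl

/-- **Corollary.** The simplicial complex `Δ` on `[n]` whose Stanley–Reisner ideal is
`B_t(u)` — the faces are the `F ⊆ [n]` with `∏_{p ∈ F} x_p ∉ B_t(u)` — is vertex
decomposable. -/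
theorem stmt7 (K : Type*) [Field K] (n d : ℕ) [NeZero n] (t j : ℕ → ℕ)
    (hd : 2 ≤ d) (ht : ∀ k, 1 ≤ k → k ≤ d - 1 → 1 ≤ t k)
    (hj1 : 1 ≤ j 1) (hjmono : ∀ p q, 1 ≤ p → p < q → q ≤ d → j p < j q)
    (hjd : j d = n) (hspread : ∀ k, 1 ≤ k → k ≤ d - 1 → j k + t k ≤ j (k + 1)) :
    VDecomp {F : Finset ℕ | F ⊆ Finset.Icc 1 n ∧
      (∏ p ∈ F, xv K n p) ∉ tBorel K n d t j} :=
  stmt7_general K n d t j ht hjd hspread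
end

section
/- Suppose that j_i <= t_1 + ... + t_i for all i = 1,...,d-1. Then the intervals B_1,...,B_d are pairwise disjoint, i.e., B_p ∩ B_q = ∅ for all 1 <= p < q <= d, where B_r = [t_1 + ... + t_{r-1} + 1, j_r]; moreover, the graded maximal ideal m = (x_1,...,x_n) is not an associated prime of S/B_t(u)^k for any integer k >= 1. -/
open Finset MvPolynomial

/-!
Shifting the `r`-th index of a `t`-spread monomial by `t 1 + ⋯ + t (r-1)` turns the spread
condition into `a 1 ≤ ⋯ ≤ a d`: under `j r ≤ t 1 + ⋯ + t r` the generators of `B_t(u)` become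
the chains of a staircase of cells `(r, a)`, the row `r` being the block `B_r` of variables,
and the blocks are disjoint. If `m ∈ Ass(S/B_t(u)^k)`, some monomial `w ∉ B_t(u)^k` has
`x_v w ∈ B_t(u)^k` for all `v`. Every chain meets every staircase cut, and every cut misses one of
the variables `x_1`, `x_{t 1 + 1}`, so every cut carries `w`-weight at least `k`. Max-flow/min-cut
(here a greedy placement of the chains row by row) then fits `k` chains into `w`, that is
`w ∈ B_t(u)^k`.
-/

namespace MvPolynomial

theorem span_monomial_image_pow {σ R : Type*} [CommSemiring R] (E : Set (σ →₀ ℕ)) (k : ℕ) :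
    Ideal.span ((fun s => monomial s (1 : R)) '' E) ^ k =
      Ideal.span ((fun s => monomial s (1 : R)) ''
        {F | ∃ g : Fin k → σ →₀ ℕ, (∀ i, g i ∈ E) ∧ ∑ i, g i = F}) := by
  induction k with
  | zero => simp [Ideal.one_eq_top]
  | succ k ih =>
    rw [pow_succ', ih, Ideal.span_mul_span']
    congr 1
    ext p
    simp only [Set.mem_mul, Set.mem_image, Set.mem_ofPred_eq]
    constructor
    · rintro ⟨_, ⟨e, he, rfl⟩, _, ⟨_, ⟨g, hg, rfl⟩, rfl⟩, rfl⟩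
      refine ⟨_, ⟨Fin.cons e g, Fin.cases he hg, rfl⟩, ?_⟩
      simp [Fin.sum_univ_succ, monomial_mul]
    · rintro ⟨_, ⟨g, hg, rfl⟩, rfl⟩
      exact ⟨_, ⟨g 0, hg 0, rfl⟩, _, ⟨_, ⟨Fin.tail g, fun i => hg _, rfl⟩, rfl⟩,
        by simp [Fin.sum_univ_succ, monomial_mul, Fin.tail]⟩

theorem exists_monomial_of_span_X_mem_associatedPrimes {σ R : Type*} [CommRing R]
    [IsNoetherianRing R] [Finite σ] {G : Set (σ →₀ ℕ)}
    (h : Ideal.span (Set.range X) ∈ associatedPrimes (MvPolynomial σ R)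
      (MvPolynomial σ R ⧸ Ideal.span ((fun s => monomial s (1 : R)) '' G))) :
    ∃ m, (∀ g ∈ G, ¬ g ≤ m) ∧ ∀ v, ∃ g ∈ G, g ≤ m + Finsupp.single v 1 := by
  set J := Ideal.span ((fun s => monomial s (1 : R)) '' G)
  obtain ⟨hprime, x, hann⟩ := isAssociatedPrime_iff.1 h
  obtain ⟨f, rfl⟩ := Ideal.Quotient.mk_surjective x
  have hf : f ∉ J := by
    intro hf
    apply hprime.ne_top
    rw [hann, Ideal.Quotient.eq_zero_iff_mem.2 hf, eq_top_iff]
    intro r _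
    simp [Submodule.mem_colon_singleton]
  have hXf : ∀ v, X v * f ∈ J := by
    intro v
    have hv : (X v : MvPolynomial σ R) ∈ Ideal.span (Set.range X) := Ideal.subset_span ⟨v, rfl⟩
    rw [hann, Submodule.mem_colon_singleton, Submodule.mem_bot] at hv
    rwa [← Ideal.Quotient.eq_zero_iff_mem, map_mul, ← Ideal.Quotient.algebraMap_eq,
      ← Algebra.smul_def]
  simp only [J, mem_ideal_span_monomial_image, not_forall, not_exists, not_and] at hf hXf
  obtain ⟨m, hm, hmG⟩ := hf
  refine ⟨m, hmG, fun v => hXf v _ ?_⟩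
  rw [mem_support_iff, add_comm, coeff_X_mul]
  exact mem_support_iff.1 hm

end MvPolynomial

section GreedyRow

variable {k : ℕ} (w : ℕ → ℕ) (lo : Fin k → ℕ)

/-- `k` chains sit in the cells `lo 0 ≤ ⋯ ≤ lo (k-1)` of a row and move on to the next row, whose
cell `a` has capacity `w a`. The cells `lo s', …, v` of the next row have room for the chains
`s', …, s`. -/
def HasRoom (s : Fin k) (v : ℕ) : Prop :=
  ∀ s' ≤ s, (s : ℕ) + 1 ≤ s' + ∑ a ∈ Ico (lo s') (v + 1), w a

noncomputable def greedyRow (s : Fin k) : ℕ := sInf {v | HasRoom w lo s v}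

variable {w lo}

theorem hasRoom_greedyRow {N : ℕ} (hN : ∀ s, HasRoom w lo s N) (s : Fin k) :
    HasRoom w lo s (greedyRow w lo s) :=
  Nat.sInf_mem (s := {v | HasRoom w lo s v}) ⟨N, hN s⟩

theorem greedyRow_le {N : ℕ} (hN : ∀ s, HasRoom w lo s N) (s : Fin k) : greedyRow w lo s ≤ N :=
  Nat.sInf_le (hN s)

theorem le_greedyRow {N : ℕ} (hN : ∀ s, HasRoom w lo s N) (s : Fin k) :
    lo s ≤ greedyRow w lo s := by
  by_contra! h
  have := hasRoom_greedyRow hN s s le_rfl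
  rw [Ico_eq_empty (by omega), sum_empty] at this
  omega

theorem greedyRow_mono {N : ℕ} (hN : ∀ s, HasRoom w lo s N) : Monotone (greedyRow w lo) := by
  intro s₁ s₂ h
  refine Nat.sInf_le fun s' hs' => ?_
  have := hasRoom_greedyRow hN s₂ s' (hs'.trans h)
  have : (s₁ : ℕ) ≤ s₂ := h
  omega

theorem exists_add_sum_le_greedyRow (s : Fin k) :
    ∃ s' ≤ s, (s' : ℕ) + ∑ a ∈ Ico (lo s') (greedyRow w lo s), w a ≤ s := by
  rcases Nat.eq_zero_or_pos (greedyRow w lo s) with h | h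
  · exact ⟨s, le_rfl, by simp [h]⟩
  · have hnot : ¬ HasRoom w lo s (greedyRow w lo s - 1) :=
      Nat.notMem_of_lt_sInf (s := {v | HasRoom w lo s v}) (by unfold greedyRow at h ⊢; omega)
    simp only [HasRoom, not_forall, not_le, Nat.sub_add_cancel h] at hnot
    obtain ⟨s', hs', hlt⟩ := hnot
    exact ⟨s', hs', by omega⟩

theorem card_greedyRow_eq_le (hlo : Monotone lo) {N : ℕ} (hN : ∀ s, HasRoom w lo s N) (a : ℕ) :
    #{s | greedyRow w lo s = a} ≤ w a := by
  set F := ({s | greedyRow w lo s = a} : Finset (Fin k))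
  rcases F.eq_empty_or_nonempty with hF | hF
  · simp [hF]
  have h₀ := mem_filter.1 (F.min'_mem hF)
  have h₁ := mem_filter.1 (F.max'_mem hF)
  obtain ⟨s', hs', hcert⟩ := exists_add_sum_le_greedyRow (w := w) (F.min' hF)
  have hroom := hasRoom_greedyRow hN (F.max' hF) s' (hs'.trans (F.min'_le _ (F.max'_mem hF)))
  have hlo' : lo s' ≤ a := (hlo hs').trans (h₀.2 ▸ le_greedyRow hN _)
  rw [h₁.2, sum_Ico_succ_top hlo'] at hroom
  rw [h₀.2] at hcert
  calc #F ≤ #(Icc (F.min' hF) (F.max' hF)) :=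
        card_le_card fun s hs => mem_Icc.2 ⟨F.min'_le s hs, F.le_max' s hs⟩
    _ = F.max' hF + 1 - F.min' hF := Fin.card_Icc _ _
    _ ≤ w a := by omega

end GreedyRow

section Cuts

/-- A staircase cut `c 1 ≤ c 2 ≤ ⋯` consists of the cells `a ∈ [c x, c (x+1))` of the rows `x`;
`V x a` is the capacity of the cell `(x, a)`. -/
def cutWeight (V : ℕ → ℕ → ℕ) (r : ℕ) (c : ℕ → ℕ) : ℕ :=
  ∑ x ∈ Icc 1 r, ∑ a ∈ Ico (c x) (c (x + 1)), V x a

def extendCut (c : ℕ → ℕ) (r y : ℕ) : ℕ → ℕ := fun x => if x ≤ r + 1 then c x else y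

theorem cutWeight_succ (V : ℕ → ℕ → ℕ) (r : ℕ) (c : ℕ → ℕ) :
    cutWeight V (r + 1) c =
      cutWeight V r c + ∑ a ∈ Ico (c (r + 1)) (c (r + 2)), V (r + 1) a :=
  sum_Icc_succ_top (by omega) _

theorem cutWeight_congr (V : ℕ → ℕ → ℕ) (r : ℕ) {c c' : ℕ → ℕ}
    (h : ∀ x ≤ r + 1, c x = c' x) : cutWeight V r c = cutWeight V r c' :=
  sum_congr rfl fun x hx => by
    rw [mem_Icc] at hx
    rw [h x (by omega), h (x + 1) (by omega)]

theorem cutWeight_mono {V W : ℕ → ℕ → ℕ} (h : V ≤ W) (r : ℕ) (c : ℕ → ℕ) :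
    cutWeight V r c ≤ cutWeight W r c := by
  unfold cutWeight
  gcongr with x _ a _
  exact h x a

theorem cutWeight_sum {ι : Type*} (S : Finset ι) (V : ι → ℕ → ℕ → ℕ) (r : ℕ) (c : ℕ → ℕ) :
    cutWeight (∑ s ∈ S, V s) r c = ∑ s ∈ S, cutWeight (V s) r c := by
  simp only [cutWeight, Finset.sum_apply]
  rw [sum_comm]
  refine sum_congr rfl fun x _ => ?_
  rw [sum_comm]

theorem cutWeight_extendCut (V : ℕ → ℕ → ℕ) (c : ℕ → ℕ) (r y : ℕ) :
    cutWeight V (r + 1) (extendCut c r y) =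
      cutWeight V r c + ∑ a ∈ Ico (c (r + 1)) y, V (r + 1) a := by
  rw [cutWeight_succ, cutWeight_congr V r (c := extendCut c r y) (c' := c) fun x hx => if_pos hx]
  simp [extendCut]

theorem cutWeight_extendCut_of_lt (V : ℕ → ℕ → ℕ) (c : ℕ → ℕ) (r y : ℕ) {d : ℕ} (hd : r < d) :
    cutWeight V d (extendCut c r y) = cutWeight V r c + ∑ a ∈ Ico (c (r + 1)) y, V (r + 1) a := by
  induction d, hd using Nat.le_induction with
  | base => exact cutWeight_extendCut V c r y
  | succ d hd ih =>
    rw [cutWeight_succ, ih]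
    simp [extendCut, show ¬ d + 1 ≤ r + 1 by omega, show ¬ d + 2 ≤ r + 1 by omega]

theorem extendCut_le_succ {c : ℕ → ℕ} {r y : ℕ} (hc : ∀ x ∈ Icc 1 r, c x ≤ c (x + 1))
    (hy : c (r + 1) ≤ y) (x : ℕ) (hx : 1 ≤ x) :
    extendCut c r y x ≤ extendCut c r y (x + 1) := by
  unfold extendCut
  split_ifs <;> first | omega | exact hc x (mem_Icc.2 ⟨hx, by omega⟩) | grind

theorem exists_mem_Ico_of_chain {d N : ℕ} (hd : 1 ≤ d) {a c : ℕ → ℕ}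
    (ha : ∀ x ∈ Ico 1 d, a x ≤ a (x + 1)) (had : a d ≤ N) (hc1 : c 1 = 0)
    (hcd : c (d + 1) = N + 1) : ∃ x ∈ Icc 1 d, a x ∈ Ico (c x) (c (x + 1)) := by
  by_contra! h
  simp only [mem_Ico, not_and, not_lt] at h
  have key : ∀ x, 1 ≤ x → x ≤ d → c (x + 1) ≤ a x := by
    intro x hx1 hxd
    induction x, hx1 using Nat.le_induction with
    | base => exact h 1 (mem_Icc.2 ⟨le_rfl, hd⟩) (by omega)
    | succ x hx ih =>
      exact h (x + 1) (mem_Icc.2 ⟨by omega, hxd⟩)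
        ((ih (by omega)).trans (ha x (mem_Ico.2 ⟨hx, by omega⟩)))
  have := key d hd le_rfl
  omega

end Cuts

section Packing

structure IsPartialPacking (V : ℕ → ℕ → ℕ) {k : ℕ} (N r : ℕ) (σ : ℕ → Fin k → ℕ) : Prop where
  le_succ : ∀ x ∈ Ico 1 r, ∀ s, σ x s ≤ σ (x + 1) s
  card_le : ∀ x ∈ Icc 1 r, ∀ a, #{s | σ x s = a} ≤ V x a
  monotone_top : Monotone (σ r)
  top_le : ∀ s, σ r s ≤ N
  /-- At most `s` chains fit below `σ r s`, so the greedy placement is optimal. -/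
  exists_cut : ∀ s, ∃ c : ℕ → ℕ, c 1 = 0 ∧ (∀ x ∈ Icc 1 r, c x ≤ c (x + 1)) ∧
    c (r + 1) = σ r s ∧ cutWeight V r c ≤ s

variable {V : ℕ → ℕ → ℕ} {k N : ℕ}

theorem isPartialPacking_zero : IsPartialPacking V N 0 (fun _ (_ : Fin k) => 0) where
  le_succ := by simp
  card_le := by simp
  monotone_top := monotone_const
  top_le := by simp
  exists_cut _ := ⟨fun _ => 0, rfl, by simp, rfl, by simp [cutWeight]⟩

theorem IsPartialPacking.hasRoom {r d : ℕ} {σ : ℕ → Fin k → ℕ} (hσ : IsPartialPacking V N r σ)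
    (hr : r < d) (H : ∀ c : ℕ → ℕ, c 1 = 0 → (∀ x ∈ Icc 1 d, c x ≤ c (x + 1)) →
      c (d + 1) = N + 1 → k ≤ cutWeight V d c) (s : Fin k) :
    HasRoom (V (r + 1)) (σ r) s N := by
  intro s' _
  obtain ⟨c, hc1, hcmono, hctop, hcw⟩ := hσ.exists_cut s'
  have hk := H (extendCut c r (N + 1)) (by simp [extendCut, hc1])
    (fun x hx => extendCut_le_succ hcmono (by rw [hctop]; exact (hσ.top_le s').trans (by omega))
      x (mem_Icc.1 hx).1)
    (by simp [extendCut, show ¬ d + 1 ≤ r + 1 by omega])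
  rw [cutWeight_extendCut_of_lt V c r (N + 1) hr, hctop] at hk
  omega

theorem IsPartialPacking.succ {r : ℕ} {σ : ℕ → Fin k → ℕ} (hσ : IsPartialPacking V N r σ)
    (hN : ∀ s, HasRoom (V (r + 1)) (σ r) s N) :
    IsPartialPacking V N (r + 1) (Function.update σ (r + 1) (greedyRow (V (r + 1)) (σ r))) := by
  set τ := greedyRow (V (r + 1)) (σ r)
  have hold : ∀ x ≤ r, Function.update σ (r + 1) τ x = σ x := fun x hx =>
    Function.update_of_ne (by omega) _ _
  refine ⟨fun x hx s => ?_, fun x hx a => ?_, ?_, ?_, fun s => ?_⟩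
  · rw [mem_Ico] at hx
    rcases (show x < r ∨ x = r by omega) with hx' | rfl
    · rw [hold x (by omega), hold (x + 1) (by omega)]
      exact hσ.le_succ x (mem_Ico.2 ⟨hx.1, hx'⟩) s
    · rw [hold x le_rfl, Function.update_self]
      exact le_greedyRow hN s
  · rw [mem_Icc] at hx
    rcases (show x ≤ r ∨ x = r + 1 by omega) with hx' | rfl
    · rw [hold x hx']
      exact hσ.card_le x (mem_Icc.2 ⟨hx.1, hx'⟩) a
    · rw [Function.update_self]
      exact card_greedyRow_eq_le hσ.monotone_top hN a
  · rw [Function.update_self]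
    exact greedyRow_mono hN
  · rw [Function.update_self]
    exact greedyRow_le hN
  · obtain ⟨s', hs', hcert⟩ := exists_add_sum_le_greedyRow (w := V (r + 1)) (lo := σ r) s
    obtain ⟨c, hc1, hcmono, hctop, hcw⟩ := hσ.exists_cut s'
    refine ⟨extendCut c r (τ s), by simp [extendCut, hc1], fun x hx => extendCut_le_succ hcmono
      (by rw [hctop]; exact (hσ.monotone_top hs').trans (le_greedyRow hN s)) x (mem_Icc.1 hx).1,
      by simp [extendCut, τ], ?_⟩
    rw [cutWeight_extendCut, hctop]
    simp only [τ]
    omega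

end Packing

theorem exists_chains_of_le_cutWeight (V : ℕ → ℕ → ℕ) {d k N : ℕ}
    (H : ∀ c : ℕ → ℕ, c 1 = 0 → (∀ x ∈ Icc 1 d, c x ≤ c (x + 1)) → c (d + 1) = N + 1 →
      k ≤ cutWeight V d c) :
    ∃ σ : ℕ → Fin k → ℕ, (∀ x ∈ Ico 1 d, ∀ s, σ x s ≤ σ (x + 1) s) ∧
      ∀ x ∈ Icc 1 d, ∀ a, #{s | σ x s = a} ≤ V x a := by
  suffices ∀ r ≤ d, ∃ σ : ℕ → Fin k → ℕ, IsPartialPacking V N r σ by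
    obtain ⟨σ, hσ⟩ := this d le_rfl
    exact ⟨σ, hσ.le_succ, hσ.card_le⟩
  intro r hr
  induction r with
  | zero => exact ⟨_, isPartialPacking_zero⟩
  | succ r ih =>
    obtain ⟨σ, hσ⟩ := ih (by omega)
    exact ⟨_, hσ.succ (hσ.hasRoom (by omega) H)⟩

section SpreadBlocks

variable {n : ℕ} [NeZero n] {d k : ℕ} {t j : ℕ → ℕ}

def spreadOffset (t : ℕ → ℕ) (r : ℕ) : ℕ := ∑ s ∈ Icc 1 (r - 1), t s

theorem spreadOffset_succ (t : ℕ → ℕ) {r : ℕ} (hr : 1 ≤ r) :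
    spreadOffset t (r + 1) = spreadOffset t r + t r := by
  unfold spreadOffset
  rw [Nat.add_sub_cancel, ← Nat.sub_add_cancel hr, sum_Icc_succ_top (by omega),
    Nat.add_sub_cancel]

theorem spreadOffset_mono (t : ℕ → ℕ) : Monotone (spreadOffset t) := fun _ _ h =>
  sum_le_sum_of_subset (Icc_subset_Icc_right (by omega))

theorem j_le_spreadOffset (hc : ∀ r, 1 ≤ r → r ≤ d - 1 → j r ≤ ∑ s ∈ Icc 1 r, t s)
    {p q : ℕ} (hp : 1 ≤ p) (hpq : p < q) (hqd : q ≤ d) : j p ≤ spreadOffset t q :=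
  (hc p hp (by omega)).trans (spreadOffset_mono t (show p + 1 ≤ q from hpq))

theorem spreadOffset_lt_of_mem_spreadIdx {i : ℕ → ℕ} (hi : i ∈ spreadIdx d t j) {r : ℕ}
    (hr : r ∈ Icc 1 d) : spreadOffset t r < i r := by
  obtain ⟨hr1, hrd⟩ := mem_Icc.1 hr
  clear hr
  induction r, hr1 using Nat.le_induction with
  | base =>
    simpa [spreadOffset, Nat.lt_iff_add_one_le] using (hi.1 1 le_rfl hrd).1
  | succ r hr ih =>
    rw [spreadOffset_succ t hr]
    have := hi.2 r hr hrd
    have := ih (by omega)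
    omega

/-- `(r, a)` is a cell of the block `B_r = [spreadOffset t r + 1, j r]`; it stands for the
variable `x_{spreadOffset t r + a}`. -/
abbrev IsCell (t j : ℕ → ℕ) (r a : ℕ) : Prop := 0 < a ∧ spreadOffset t r + a ≤ j r

def cellVar (n : ℕ) [NeZero n] (t : ℕ → ℕ) (r a : ℕ) : Fin n :=
  Fin.ofNat n (spreadOffset t r + a - 1)

def cellWeight (t j : ℕ → ℕ) (m : Fin n →₀ ℕ) (r a : ℕ) : ℕ :=
  if IsCell t j r a then m (cellVar n t r a) else 0

theorem eq_of_cellVar_eq (hjn : ∀ r ∈ Icc 1 d, j r ≤ n)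
    (hblock : ∀ p q, 1 ≤ p → p < q → q ≤ d → j p ≤ spreadOffset t q)
    {r r' a a' : ℕ} (hr : r ∈ Icc 1 d) (hr' : r' ∈ Icc 1 d) (h : IsCell t j r a)
    (h' : IsCell t j r' a') (heq : cellVar n t r a = cellVar n t r' a') : r = r' ∧ a = a' := by
  have hpos := congrArg Fin.val heq
  simp only [cellVar, Fin.val_ofNat] at hpos
  rw [Nat.mod_eq_of_lt (by have := hjn r hr; omega),
    Nat.mod_eq_of_lt (by have := hjn r' hr'; omega)] at hpos
  rw [mem_Icc] at hr hr'
  rcases lt_trichotomy r r' with hlt | rfl | hgt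
  · have := hblock r r' hr.1 hlt hr'.2
    omega
  · omega
  · have := hblock r' r hr'.1 hgt hr.2
    omega

noncomputable def spreadExp (n : ℕ) [NeZero n] (d : ℕ) (i : ℕ → ℕ) : Fin n →₀ ℕ :=
  ∑ r ∈ Icc 1 d, Finsupp.single (Fin.ofNat n (i r - 1)) 1

theorem monOf_eq_monomial (K : Type*) [Field K] (i : ℕ → ℕ) :
    monOf K n d i = monomial (spreadExp n d i) 1 := by
  rw [spreadExp, monomial_sum_one]
  rfl

theorem tBorel_eq_span (K : Type*) [Field K] :
    tBorel K n d t j =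
      Ideal.span ((fun s => monomial s (1 : K)) '' (spreadExp n d '' spreadIdx d t j)) := by
  rw [tBorel, Set.image_image]
  simp only [monOf_eq_monomial]

theorem cellWeight_mono {m m' : Fin n →₀ ℕ} (h : m ≤ m') :
    cellWeight t j m ≤ cellWeight t j m' := by
  intro r a
  unfold cellWeight
  split_ifs
  exacts [h _, le_rfl]

theorem cellWeight_sum {ι : Type*} (S : Finset ι) (g : ι → Fin n →₀ ℕ) :
    cellWeight t j (∑ s ∈ S, g s) = ∑ s ∈ S, cellWeight t j (g s) := by
  ext r a
  simp only [cellWeight, Finset.sum_apply, Finsupp.finsetSum_apply]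
  split_ifs <;> simp

theorem isCell_of_cellWeight_pos {m : Fin n →₀ ℕ} {r a : ℕ} (h : 0 < cellWeight t j m r a) :
    IsCell t j r a := by
  by_contra hc
  simp [cellWeight, hc] at h

theorem one_le_cutWeight_spreadExp (hd : 1 ≤ d) (hjd : j d ≤ n) {i : ℕ → ℕ}
    (hi : i ∈ spreadIdx d t j) {c : ℕ → ℕ} (hc1 : c 1 = 0) (hcd : c (d + 1) = n + 1) :
    1 ≤ cutWeight (cellWeight t j (spreadExp n d i)) d c := by
  have hlt := fun r hr => spreadOffset_lt_of_mem_spreadIdx hi (r := r) hr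
  obtain ⟨x, hx, hxc⟩ := exists_mem_Ico_of_chain hd (a := fun x => i x - spreadOffset t x)
    (fun x hx => by
      rw [mem_Ico] at hx
      have := hi.2 x hx.1 hx.2
      have := hlt x (mem_Icc.2 ⟨hx.1, hx.2.le⟩)
      rw [spreadOffset_succ t hx.1]
      omega)
    (by have := (hi.1 d hd le_rfl).2; omega) hc1 hcd
  have hix := hlt x hx
  have hcell : IsCell t j x (i x - spreadOffset t x) :=
    ⟨by omega, by have := (hi.1 x (mem_Icc.1 hx).1 (mem_Icc.1 hx).2).2; omega⟩
  have hvar : cellVar n t x (i x - spreadOffset t x) = Fin.ofNat n (i x - 1) := by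
    rw [cellVar, Nat.add_sub_cancel' hix.le]
  calc 1 = Finsupp.single (Fin.ofNat n (i x - 1)) 1 (Fin.ofNat n (i x - 1)) :=
        (Finsupp.single_eq_same).symm
    _ ≤ cellWeight t j (spreadExp n d i) x (i x - spreadOffset t x) := by
        rw [cellWeight, if_pos hcell, hvar, spreadExp, Finsupp.finsetSum_apply]
        exact single_le_sum (f := fun r => Finsupp.single (Fin.ofNat n (i r - 1)) 1 _)
          (fun _ _ => Nat.zero_le _) hx
    _ ≤ ∑ a ∈ Ico (c x) (c (x + 1)), cellWeight t j (spreadExp n d i) x a :=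
        single_le_sum (fun _ _ => Nat.zero_le _) hxc
    _ ≤ cutWeight (cellWeight t j (spreadExp n d i)) d c :=
        single_le_sum (f := fun x => ∑ a ∈ Ico (c x) (c (x + 1)), _)
          (fun _ _ => Nat.zero_le _) hx

theorem le_cutWeight_of_sum_le (hd : 1 ≤ d) (hjd : j d ≤ n) {g : Fin k → Fin n →₀ ℕ}
    (hg : ∀ s, g s ∈ spreadExp n d '' spreadIdx d t j) {m : Fin n →₀ ℕ} (hm : ∑ s, g s ≤ m)
    {c : ℕ → ℕ} (hc1 : c 1 = 0) (hcd : c (d + 1) = n + 1) :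
    k ≤ cutWeight (cellWeight t j m) d c :=
  calc k = ∑ _ : Fin k, 1 := by simp
    _ ≤ ∑ s, cutWeight (cellWeight t j (g s)) d c := sum_le_sum fun s _ => by
        obtain ⟨i, hi, hgi⟩ := hg s
        exact hgi ▸ one_le_cutWeight_spreadExp hd hjd hi hc1 hcd
    _ = cutWeight (cellWeight t j (∑ s, g s)) d c := by rw [cellWeight_sum, cutWeight_sum]
    _ ≤ cutWeight (cellWeight t j m) d c := cutWeight_mono (cellWeight_mono hm) d c

theorem cutWeight_cellWeight_add_single (hjn : ∀ r ∈ Icc 1 d, j r ≤ n)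
    (hblock : ∀ p q, 1 ≤ p → p < q → q ≤ d → j p ≤ spreadOffset t q) {r₀ a₀ : ℕ}
    (hr₀ : r₀ ∈ Icc 1 d) (hcell : IsCell t j r₀ a₀) {c : ℕ → ℕ}
    (hcut : a₀ ∉ Ico (c r₀) (c (r₀ + 1))) (m : Fin n →₀ ℕ) :
    cutWeight (cellWeight t j (m + Finsupp.single (cellVar n t r₀ a₀) 1)) d c =
      cutWeight (cellWeight t j m) d c := by
  refine sum_congr rfl fun x hx => sum_congr rfl fun a ha => ?_
  unfold cellWeight
  split_ifs with hxa
  · rw [Finsupp.add_apply, Finsupp.single_apply, if_neg, add_zero]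
    intro heq
    obtain ⟨rfl, rfl⟩ := eq_of_cellVar_eq hjn hblock hr₀ hx hcell hxa heq
    exact hcut ha
  · rfl

theorem exists_cutWeight_cellWeight_add_single (hd : 2 ≤ d) (hj1 : 1 ≤ j 1)
    (hj2 : j 1 + t 1 ≤ j 2) (hjn : ∀ r ∈ Icc 1 d, j r ≤ n)
    (hblock : ∀ p q, 1 ≤ p → p < q → q ≤ d → j p ≤ spreadOffset t q) {c : ℕ → ℕ} (hc1 : c 1 = 0)
    (m : Fin n →₀ ℕ) : ∃ v, cutWeight (cellWeight t j (m + Finsupp.single v 1)) d c =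
      cutWeight (cellWeight t j m) d c := by
  -- `x_1` lies in the cut only if `c 2 > 1`, and then `x_{t 1 + 1}` does not.
  by_cases hc2 : c 2 ≤ 1
  · exact ⟨_, cutWeight_cellWeight_add_single hjn hblock (mem_Icc.2 ⟨le_rfl, by omega⟩)
      ⟨Nat.one_pos, by simpa [spreadOffset] using hj1⟩ (by simp [hc1]; omega) m⟩
  · exact ⟨_, cutWeight_cellWeight_add_single hjn hblock (r₀ := 2) (mem_Icc.2 ⟨by omega, hd⟩)
      ⟨Nat.one_pos, by simp [spreadOffset]; omega⟩ (by simp; omega) m⟩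

theorem mem_spreadIdx_of_chain {σ : ℕ → ℕ} (hchain : ∀ x ∈ Ico 1 d, σ x ≤ σ (x + 1))
    (hcell : ∀ x ∈ Icc 1 d, IsCell t j x (σ x)) :
    (fun r => spreadOffset t r + σ r) ∈ spreadIdx d t j := by
  refine ⟨fun r hr hrd => ?_, fun r hr hrd => ?_⟩ <;> dsimp only
  · have := hcell r (mem_Icc.2 ⟨hr, hrd⟩)
    exact ⟨by omega, this.2⟩
  · have := hchain r (mem_Ico.2 ⟨hr, hrd⟩)
    rw [spreadOffset_succ t hr]
    omega

theorem isCell_of_card_le {m : Fin n →₀ ℕ} {σ : ℕ → Fin k → ℕ}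
    (hcard : ∀ x ∈ Icc 1 d, ∀ a, #{s | σ x s = a} ≤ cellWeight t j m x a) (s : Fin k) {x : ℕ}
    (hx : x ∈ Icc 1 d) : IsCell t j x (σ x s) :=
  isCell_of_cellWeight_pos <| (card_pos.2 ⟨s, by simp⟩).trans_le (hcard x hx _)

theorem sum_spreadExp_le (hjn : ∀ r ∈ Icc 1 d, j r ≤ n)
    (hblock : ∀ p q, 1 ≤ p → p < q → q ≤ d → j p ≤ spreadOffset t q) {m : Fin n →₀ ℕ}
    {σ : ℕ → Fin k → ℕ} (hcard : ∀ x ∈ Icc 1 d, ∀ a, #{s | σ x s = a} ≤ cellWeight t j m x a) :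
    ∑ s, spreadExp n d (fun r => spreadOffset t r + σ r s) ≤ m := by
  have hcell := isCell_of_card_le hcard
  intro q
  simp only [spreadExp, Finsupp.finsetSum_apply, Finsupp.single_apply]
  change ∑ s, ∑ r ∈ Icc 1 d, (if cellVar n t r (σ r s) = q then 1 else 0) ≤ m q
  by_cases hq : ∃ s₀, ∃ r₀ ∈ Icc 1 d, cellVar n t r₀ (σ r₀ s₀) = q
  · obtain ⟨s₀, r₀, hr₀, rfl⟩ := hq
    have key : ∀ s, ∀ r ∈ Icc 1 d,
        cellVar n t r (σ r s) = cellVar n t r₀ (σ r₀ s₀) ↔ r = r₀ ∧ σ r₀ s = σ r₀ s₀ := by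
      intro s r hr
      constructor
      · intro heq
        obtain ⟨rfl, h⟩ := eq_of_cellVar_eq hjn hblock hr hr₀ (hcell s hr) (hcell s₀ hr₀) heq
        exact ⟨rfl, h⟩
      · rintro ⟨rfl, h⟩
        rw [h]
    calc ∑ s, ∑ r ∈ Icc 1 d, (if cellVar n t r (σ r s) = cellVar n t r₀ (σ r₀ s₀) then 1 else 0)
        = ∑ s, if σ r₀ s = σ r₀ s₀ then 1 else 0 := sum_congr rfl fun s _ => by
          rw [sum_congr rfl fun r hr => if_congr (key s r hr) rfl rfl]
          simp_rw [ite_and]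
          rw [sum_ite_eq' _ _ (fun r => if σ r₀ s = σ r₀ s₀ then 1 else 0), if_pos hr₀]
      _ = #{s | σ r₀ s = σ r₀ s₀} := by rw [sum_boole, Nat.cast_id]
      _ ≤ cellWeight t j m r₀ (σ r₀ s₀) := hcard r₀ hr₀ _
      _ = m (cellVar n t r₀ (σ r₀ s₀)) := if_pos (hcell s₀ hr₀)
  · simp only [not_exists, not_and] at hq
    rw [sum_eq_zero fun s _ => sum_eq_zero fun r hr => if_neg (hq s r hr)]
    exact Nat.zero_le _

end SpreadBlocks

theorem stmt13_general (K : Type*) [Field K] (n d : ℕ) [NeZero n] (t j : ℕ → ℕ)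
    (hd : 2 ≤ d)
    (hj1 : 1 ≤ j 1) (hjmono : ∀ p q, 1 ≤ p → p < q → q ≤ d → j p < j q)
    (hjd : j d = n) (hspread : ∀ k, 1 ≤ k → k ≤ d - 1 → j k + t k ≤ j (k + 1))
    (hc : ∀ r, 1 ≤ r → r ≤ d - 1 → j r ≤ ∑ s ∈ Finset.Icc 1 r, t s) :
    (∀ p q, 1 ≤ p → p < q → q ≤ d →
      Disjoint (Finset.Icc ((∑ s ∈ Finset.Icc 1 (p - 1), t s) + 1) (j p))
        (Finset.Icc ((∑ s ∈ Finset.Icc 1 (q - 1), t s) + 1) (j q))) ∧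
    ∀ k : ℕ, 1 ≤ k →
      Ideal.span (Set.range (MvPolynomial.X : Fin n → MvPolynomial (Fin n) K)) ∉
        associatedPrimes (MvPolynomial (Fin n) K)
          (MvPolynomial (Fin n) K ⧸ tBorel K n d t j ^ k) := by
  have hblock : ∀ p q, 1 ≤ p → p < q → q ≤ d → j p ≤ spreadOffset t q :=
    fun _ _ => j_le_spreadOffset hc
  have hjn : ∀ r ∈ Icc 1 d, j r ≤ n := fun r hr => by
    rcases (mem_Icc.1 hr).2.lt_or_eq with h | rfl
    · exact hjd ▸ (hjmono r d (mem_Icc.1 hr).1 h le_rfl).le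
    · exact hjd.le
  refine ⟨fun p q hp hpq hqd => disjoint_left.2 fun x hxp hxq => ?_, fun k _ hass => ?_⟩
  · have := hblock p q hp hpq hqd
    rw [mem_Icc] at hxp hxq
    unfold spreadOffset at this
    omega
  rw [tBorel_eq_span, span_monomial_image_pow] at hass
  obtain ⟨m, hm, hmv⟩ := exists_monomial_of_span_X_mem_associatedPrimes hass
  have hcut : ∀ c : ℕ → ℕ, c 1 = 0 → (∀ x ∈ Icc 1 d, c x ≤ c (x + 1)) → c (d + 1) = n + 1 →
      k ≤ cutWeight (cellWeight t j m) d c := by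
    intro c hc1 _ hcd
    obtain ⟨v, hv⟩ := exists_cutWeight_cellWeight_add_single hd hj1
      (hspread 1 le_rfl (by omega)) hjn hblock hc1 m
    obtain ⟨_, ⟨g, hg, rfl⟩, hgle⟩ := hmv v
    exact hv ▸ le_cutWeight_of_sum_le (by omega) hjd.le hg hgle hc1 hcd
  obtain ⟨σ, hchain, hcard⟩ := exists_chains_of_le_cutWeight _ hcut
  exact hm _ ⟨_, fun s => ⟨_, mem_spreadIdx_of_chain (fun x hx => hchain x hx s)
    (fun x hx => isCell_of_card_le hcard s hx), rfl⟩, rfl⟩ (sum_spreadExp_le hjn hblock hcard)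

/-- **Proposition (b).** If `j i ≤ t 1 + ⋯ + t i` for all `i = 1,…,d-1`, then the
intervals `B_r = [t 1 + ⋯ + t (r-1) + 1, j r]` are pairwise disjoint and
`m = (x_1,…,x_n) ∉ Ass(S/B_t(u)^k)` for all `k ≥ 1`. -/
theorem stmt13 (K : Type*) [Field K] (n d : ℕ) [NeZero n] (t j : ℕ → ℕ)
    (hd : 2 ≤ d) (ht : ∀ k, 1 ≤ k → k ≤ d - 1 → 1 ≤ t k)
    (hj1 : 1 ≤ j 1) (hjmono : ∀ p q, 1 ≤ p → p < q → q ≤ d → j p < j q)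
    (hjd : j d = n) (hspread : ∀ k, 1 ≤ k → k ≤ d - 1 → j k + t k ≤ j (k + 1))
    (hc : ∀ r, 1 ≤ r → r ≤ d - 1 → j r ≤ ∑ s ∈ Finset.Icc 1 r, t s) :
    (∀ p q, 1 ≤ p → p < q → q ≤ d →
      Disjoint (Finset.Icc ((∑ s ∈ Finset.Icc 1 (p - 1), t s) + 1) (j p))
        (Finset.Icc ((∑ s ∈ Finset.Icc 1 (q - 1), t s) + 1) (j q))) ∧
    ∀ k : ℕ, 1 ≤ k →
      Ideal.span (Set.range (MvPolynomial.X : Fin n → MvPolynomial (Fin n) K)) ∉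
        associatedPrimes (MvPolynomial (Fin n) K)
          (MvPolynomial (Fin n) K ⧸ tBorel K n d t j ^ k) :=
  stmt13_general K n d t j hd hj1 hjmono hjd hspread hc
end

section
/- Let Gamma be the linear relation graph of I = B_t(u) and fix i in {1,...,d}. If |B_i| >= 2 (equivalently, j_i > t_1 + ... + t_{i-1} + 1), then the induced subgraph of Gamma on B_i is complete: for all h_1, h_2 in B_i with h_1 ≠ h_2, the pair {h_1, h_2} is an edge of Gamma, where B_i = [t_1 + ... + t_{i-1} + 1, j_i]. -/
open Finset MvPolynomial

/-!
For `h ∈ B_r` let `w_h` be the `t`-spread index function that takes the smallest possible values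
`1, 1 + t 1, 1 + t 1 + t 2, …` before position `r`, the value `h` at position `r`, and the largest
possible values `j s` after it. All `w_h` lie in `G(B_t(u))` and differ only at position `r`, so
`x_{h₁} w_{h₂} = x_{h₂} w_{h₁}` is a linear relation joining `h₁` and `h₂`.
-/

/-- The `s`-th index `1 + t 1 + ⋯ + t (s-1)` of the smallest `t`-spread monomial. -/
def minSpread (t : ℕ → ℕ) (s : ℕ) : ℕ := (∑ k ∈ Icc 1 (s - 1), t k) + 1

lemma minSpread_succ (t : ℕ → ℕ) {s : ℕ} (hs : 1 ≤ s) :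
    minSpread t (s + 1) = minSpread t s + t s := by
  obtain ⟨m, rfl⟩ := Nat.exists_eq_add_of_le' hs
  simp only [minSpread, Nat.add_sub_cancel, sum_Icc_succ_top (by omega : 1 ≤ m + 1)]
  omega

def pivotIdx (t J : ℕ → ℕ) (r h : ℕ) : ℕ → ℕ :=
  Function.update (fun s => if s < r then minSpread t s else J s) r h

section Spread

variable {e : ℕ} {t J : ℕ → ℕ}
  (hspread : ∀ k, 1 ≤ k → k ≤ e - 1 → J k + t k ≤ J (k + 1))
include hspread

lemma minSpread_le_of_spread (hJ1 : 1 ≤ J 1) {s : ℕ} (hs : 1 ≤ s) (hse : s ≤ e) :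
    minSpread t s ≤ J s := by
  induction s, hs using Nat.le_induction with
  | base => simpa [minSpread] using hJ1
  | succ m hm ih =>
    rw [minSpread_succ t hm]
    have := hspread m hm (by omega)
    have := ih (by omega)
    omega

lemma le_of_spread {p q : ℕ} (hp : 1 ≤ p) (hpq : p ≤ q) (hqe : q ≤ e) : J p ≤ J q := by
  induction q, hpq using Nat.le_induction with
  | base => rfl
  | succ m hpm ih =>
    have := hspread m (by omega) (by omega)
    have := ih (by omega)
    omega

lemma pivotIdx_mem_spreadIdx (hJ1 : 1 ≤ J 1) {r h : ℕ} (hh₁ : minSpread t r ≤ h)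
    (hh₂ : h ≤ J r) : pivotIdx t J r h ∈ spreadIdx e t J := by
  have hpos (s : ℕ) : 1 ≤ minSpread t s := Nat.le_add_left 1 _
  constructor
  · intro s hs hse
    simp only [pivotIdx, Function.update_apply]
    split_ifs with hsr
    · exact hsr ▸ ⟨(hpos r).trans hh₁, hh₂⟩
    all_goals
      have := minSpread_le_of_spread hspread hJ1 hs hse
      have := hpos s
      omega
  · intro s hs hse
    have := minSpread_succ t hs
    have := hspread s hs (by omega)
    have : s + 1 = r → minSpread t s + t s ≤ h := by
      rintro rfl
      rwa [← minSpread_succ t hs]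
    have : s = r → h + t s ≤ J (s + 1) := by
      rintro rfl
      omega
    simp only [pivotIdx, Function.update_apply]
    split_ifs <;> omega

end Spread

section Monomials

variable (K : Type*) [Field K] (n : ℕ) [NeZero n] {e : ℕ}

lemma monOf_update (i : ℕ → ℕ) {r : ℕ} (hr : r ∈ Icc 1 e) (h : ℕ) :
    monOf K n e (Function.update i r h) = xv K n h * ∏ s ∈ (Icc 1 e).erase r, xv K n (i s) := by
  rw [monOf, ← mul_prod_erase _ _ hr, Function.update_self]
  congr 1
  exact prod_congr rfl fun s hs => by rw [Function.update_of_ne (ne_of_mem_erase hs)]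

lemma xv_mul_monOf_update_comm (i : ℕ → ℕ) {r : ℕ} (hr : r ∈ Icc 1 e) (p q : ℕ) :
    xv K n p * monOf K n e (Function.update i r q) =
      xv K n q * monOf K n e (Function.update i r p) := by
  rw [monOf_update K n i hr, monOf_update K n i hr]
  ring

end Monomials

theorem stmt14_general (K : Type*) [Field K] (n d : ℕ) [NeZero n] (t j : ℕ → ℕ)
    (hj1 : 1 ≤ j 1)
    (hjd : j d = n) (hspread : ∀ k, 1 ≤ k → k ≤ d - 1 → j k + t k ≤ j (k + 1))
    (r : ℕ) (hr1 : 1 ≤ r) (hrd : r ≤ d) :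
    ∀ h₁ ∈ Finset.Icc ((∑ s ∈ Finset.Icc 1 (r - 1), t s) + 1) (j r),
      ∀ h₂ ∈ Finset.Icc ((∑ s ∈ Finset.Icc 1 (r - 1), t s) + 1) (j r),
        h₁ ≠ h₂ → lrEdge K n d (spreadIdx d t j) h₁ h₂ := by
  intro h₁ hh₁ h₂ hh₂ hne
  obtain ⟨hh₁, hh₁'⟩ := mem_Icc.mp hh₁
  obtain ⟨hh₂, hh₂'⟩ := mem_Icc.mp hh₂
  have hjr : j r ≤ n := hjd ▸ le_of_spread hspread hr1 hrd le_rfl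
  refine ⟨by omega, by omega, by omega, by omega, hne,
    pivotIdx t j r h₂, pivotIdx_mem_spreadIdx hspread hj1 hh₂ hh₂',
    pivotIdx t j r h₁, pivotIdx_mem_spreadIdx hspread hj1 hh₁ hh₁', ?_⟩
  exact xv_mul_monOf_update_comm K n _ (mem_Icc.mpr ⟨hr1, hrd⟩) h₁ h₂

/-- If `|B_r| ≥ 2`, i.e. `j r > t 1 + ⋯ + t (r-1) + 1`, then the induced subgraph of the
linear relation graph `Γ` of `B_t(u)` on `B_r = [t 1 + ⋯ + t (r-1) + 1, j r]` is
complete. -/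
theorem stmt14 (K : Type*) [Field K] (n d : ℕ) [NeZero n] (t j : ℕ → ℕ)
    (hd : 2 ≤ d) (ht : ∀ k, 1 ≤ k → k ≤ d - 1 → 1 ≤ t k)
    (hj1 : 1 ≤ j 1) (hjmono : ∀ p q, 1 ≤ p → p < q → q ≤ d → j p < j q)
    (hjd : j d = n) (hspread : ∀ k, 1 ≤ k → k ≤ d - 1 → j k + t k ≤ j (k + 1))
    (r : ℕ) (hr1 : 1 ≤ r) (hrd : r ≤ d)
    (hcard : 2 ≤ (Finset.Icc ((∑ s ∈ Finset.Icc 1 (r - 1), t s) + 1) (j r)).card) :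
    ∀ h₁ ∈ Finset.Icc ((∑ s ∈ Finset.Icc 1 (r - 1), t s) + 1) (j r),
      ∀ h₂ ∈ Finset.Icc ((∑ s ∈ Finset.Icc 1 (r - 1), t s) + 1) (j r),
        h₁ ≠ h₂ → lrEdge K n d (spreadIdx d t j) h₁ h₂ :=
  stmt14_general K n d t j hj1 hjd hspread r hr1 hrd
end
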